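/- arXiv:2008.03953 — 12 statements merged into one kernel-verified Lean document; each statement's English description precedes it below -/
import Mathlib

section
/- Let p be a prime, m ≥ 1, K = F_{p^m}, and let f : K → K be a quadratic function (with zero constant term). Then for every c ∈ K with c^p = c and c ≠ 1 (i.e., c in the prime field, c ≠ 1) and for all x, γ ∈ K, the identity f(x+γ) − c·f(x) = (1−c)·f(x + (1−c)⁻¹·γ) + f(γ) − (1−c)·f((1−c)⁻¹·γ) holds. -/
/-!
Both sides of the identity are linear in `f`, so it suffices to check it on the monomials
`x ^ p ^ i` and `x ^ (p ^ i + p ^ j) = x ^ p ^ i * x ^ p ^ j`. The maps `x ↦ x ^ p ^ i` are ring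
endomorphisms fixing the prime field, hence `(1 - c)⁻¹`, so for them the identity is a polynomial
identity in the values of two such maps at `x` and at `γ`.
-/

open Finset

section CDerivIdentity

variable {R : Type*} [CommRing R] (c d x γ : R)

def cDerivIdentity : Submodule R (R → R) where
  carrier := {f | f (x + γ) - c * f x = (1 - c) * f (x + d * γ) + f γ - (1 - c) * f (d * γ)}
  add_mem' {f g} hf hg := by
    simp only [Set.mem_ofPred_eq, Pi.add_apply] at hf hg ⊢
    linear_combination hf + hg
  zero_mem' := by simp
  smul_mem' a f hf := by
    simp only [Set.mem_ofPred_eq, Pi.smul_apply, smul_eq_mul] at hf ⊢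
    linear_combination a * hf

variable {c d}

theorem RingHom.mem_cDerivIdentity (φ : R →+* R) (hφ : φ d = d) :
    ⇑φ ∈ cDerivIdentity c d x γ := by
  change φ (x + γ) - c * φ x = (1 - c) * φ (x + d * γ) + φ γ - (1 - c) * φ (d * γ)
  simp only [map_add, map_mul, hφ]
  ring

theorem RingHom.mul_mem_cDerivIdentity (hd : (1 - c) * d = 1) (φ ψ : R →+* R) (hφ : φ d = d)
    (hψ : ψ d = d) : (fun y => φ y * ψ y) ∈ cDerivIdentity c d x γ := by
  change φ (x + γ) * ψ (x + γ) - c * (φ x * ψ x)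
    = (1 - c) * (φ (x + d * γ) * ψ (x + d * γ)) + φ γ * ψ γ - (1 - c) * (φ (d * γ) * ψ (d * γ))
  simp only [map_add, map_mul, hφ, hψ]
  linear_combination (-(φ x * ψ γ + φ γ * ψ x)) * hd

end CDerivIdentity

theorem iterateFrobenius_apply_eq_self {R : Type*} [CommSemiring R] {p : ℕ} [ExpChar R p] {c : R}
    (hc : c ^ p = c) (n : ℕ) : iterateFrobenius R p n c = c := by
  rw [coe_iterateFrobenius]
  exact Function.IsFixedPt.iterate (f := frobenius R p) hc n

theorem stmt_0_general (p m : ℕ) (hp : p.Prime)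
    (K : Type*) [Field K] [Fintype K] (hK : Fintype.card K = p ^ m)
    (f : K → K)
    (hf : ∃ (a : Fin m × Fin m → K) (b : Fin m → K), ∀ x : K,
      f x = (∑ ij : Fin m × Fin m, a ij * x ^ (p ^ (ij.1 : ℕ) + p ^ (ij.2 : ℕ)))
        + ∑ i : Fin m, b i * x ^ p ^ (i : ℕ))
    (c : K) (hc : c ^ p = c) (hc1 : c ≠ 1) (x γ : K) :
    f (x + γ) - c * f x
      = (1 - c) * f (x + (1 - c)⁻¹ * γ) + f γ - (1 - c) * f ((1 - c)⁻¹ * γ) := by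
  obtain ⟨a, b, hab⟩ := hf
  have := Fact.mk hp
  have := charP_of_card_eq_prime_pow hK
  have hd : (1 - c) * (1 - c)⁻¹ = 1 := mul_inv_cancel₀ (sub_ne_zero.mpr hc1.symm)
  have hfrob (n : ℕ) : iterateFrobenius K p n (1 - c)⁻¹ = (1 - c)⁻¹ := by
    rw [map_inv₀, map_sub, map_one, iterateFrobenius_apply_eq_self hc]
  have hf_sum : f = ∑ ij : Fin m × Fin m,
        a ij • (fun y => iterateFrobenius K p ij.1 y * iterateFrobenius K p ij.2 y)
      + ∑ i : Fin m, b i • ⇑(iterateFrobenius K p i) := by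
    ext y
    simp [hab, Finset.sum_apply, iterateFrobenius_def, pow_add]
  change f ∈ cDerivIdentity c (1 - c)⁻¹ x γ
  rw [hf_sum]
  refine add_mem (sum_mem fun ij _ => Submodule.smul_mem _ _ ?_)
    (sum_mem fun i _ => Submodule.smul_mem _ _ ?_)
  · exact RingHom.mul_mem_cDerivIdentity x γ hd _ _ (hfrob _) (hfrob _)
  · exact RingHom.mem_cDerivIdentity x γ _ (hfrob _)

/-- For a quadratic function `f` over `K = F_{p^m}` and `c` in the prime
field with `c ≠ 1`, the `c`-derivative identity
`f(x+γ) − c·f(x) = (1−c)·f(x + (1−c)⁻¹·γ) + f(γ) − (1−c)·f((1−c)⁻¹·γ)` holds. -/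
theorem stmt_0 (p m : ℕ) (hp : p.Prime) (hm : 1 ≤ m)
    (K : Type*) [Field K] [Fintype K] (hK : Fintype.card K = p ^ m)
    (f : K → K)
    (hf : ∃ (a : Fin m × Fin m → K) (b : Fin m → K), ∀ x : K,
      f x = (∑ ij : Fin m × Fin m, a ij * x ^ (p ^ (ij.1 : ℕ) + p ^ (ij.2 : ℕ)))
        + ∑ i : Fin m, b i * x ^ p ^ (i : ℕ))
    (c : K) (hc : c ^ p = c) (hc1 : c ≠ 1) (x γ : K) :
    f (x + γ) - c * f x
      = (1 - c) * f (x + (1 - c)⁻¹ * γ) + f γ - (1 - c) * f ((1 - c)⁻¹ * γ) :=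
  stmt_0_general p m hp K hK f hf c hc hc1 x γ
end

section
/- Let p be a prime, m ≥ 1, K = F_{p^m}, c ∈ K with c^p = c and c ≠ 1, and let f : K → K be a quadratic function (with zero constant term). If every b ∈ K has at most two preimages under f (in particular, if f is 2-to-1), then f is APcN with respect to c: for all a, b ∈ K, the equation f(x+a) − c·f(x) = b has at most two solutions x ∈ K. -/
/-!
Write `d = 1 - c`. Since `c` lies in the prime field, every Frobenius power `x ↦ x ^ p ^ i` is
`𝔽_p(d)`-linear, and expanding the products of two such maps shows that for a quadratic `f`
the `c`-differential `f (x + a) - c * f x` equals `d * f (x + a / d)` up to an additive constant.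
Hence, as `d ≠ 0`, the solutions of `f (x + a) - c * f x = b` are a translate of one fibre of `f`.
-/

open Function

section CDifferential

variable {K : Type*} [Field K]

/-- Functions `g` whose `c`-differential `x ↦ g (x + a) - c * g x` is, for every `a`, an affine
image of the translate `x ↦ g (x + a / (1 - c))`. -/
def cDifferentialTranslateSubmodule (c : K) : Submodule K (K → K) where
  carrier := {g | ∀ a x, g (x + a) - c * g x =
    (1 - c) * g (x + a / (1 - c)) + (g a - (1 - c) * g (a / (1 - c)))}
  zero_mem' := by simp
  add_mem' {g h} hg hh a x := by
    simp only [Pi.add_apply]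
    linear_combination hg a x + hh a x
  smul_mem' k g hg a x := by
    simp only [Pi.smul_apply, smul_eq_mul]
    linear_combination k * hg a x

theorem AddMonoidHom.coe_mem_cDifferentialTranslateSubmodule (φ : K →+ K) (c : K) :
    ⇑φ ∈ cDifferentialTranslateSubmodule c := fun a x => by
  simp only [map_add]
  ring

theorem AddMonoidHom.mul_mem_cDifferentialTranslateSubmodule {c : K} (hc : c ≠ 1)
    (φ ψ : K →+ K) (hφ : ∀ y, φ ((1 - c) * y) = (1 - c) * φ y)
    (hψ : ∀ y, ψ ((1 - c) * y) = (1 - c) * ψ y) :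
    (fun x => φ x * ψ x) ∈ cDifferentialTranslateSubmodule c := fun a x => by
  have hd : 1 - c ≠ 0 := sub_ne_zero.mpr hc.symm
  have hdiv : ∀ χ : K →+ K, (∀ y, χ ((1 - c) * y) = (1 - c) * χ y) →
      χ (a / (1 - c)) = χ a / (1 - c) := fun χ hχ => by
    rw [eq_div_iff hd, mul_comm, ← hχ, mul_div_cancel₀ _ hd]
  simp only [map_add, hdiv φ hφ, hdiv ψ hψ]
  field_simp
  ring

theorem ncard_cDifferential_eq_ncard_fiber {c : K} (hc : c ≠ 1) {g : K → K}
    (hg : g ∈ cDifferentialTranslateSubmodule c) (a b : K) :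
    ∃ t, {x | g (x + a) - c * g x = b}.ncard = {y | g y = t}.ncard := by
  set d := 1 - c
  have hd : d ≠ 0 := sub_ne_zero.mpr hc.symm
  set k := g a - d * g (a / d)
  refine ⟨(b - k) / d, ?_⟩
  have hfiber : {x | g (x + a) - c * g x = b} = (· - a / d) '' {y | g y = (b - k) / d} := by
    ext x
    simp only [Set.mem_ofPred_eq, Set.mem_image, hg a x, eq_div_iff hd]
    constructor
    · intro hx
      exact ⟨x + a / d, by linear_combination hx, add_sub_cancel_right x _⟩
    · rintro ⟨y, hy, rfl⟩
      rw [sub_add_cancel]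
      linear_combination hy
  rw [hfiber, Set.ncard_image_of_injective _ sub_left_injective]

end CDifferential

section Frobenius

variable {K : Type*} [Field K] {p : ℕ} [Fact p.Prime] [CharP K p]

theorem iterateFrobenius_one_sub_mul {c : K} (hc : c ^ p = c) (i : ℕ) (y : K) :
    iterateFrobenius K p i ((1 - c) * y) = (1 - c) * iterateFrobenius K p i y := by
  have hfix : IsFixedPt (iterateFrobenius K p i) c := by
    rw [coe_iterateFrobenius]
    exact IsFixedPt.iterate (by rwa [IsFixedPt, frobenius_def]) i
  rw [map_mul, map_sub, map_one, hfix.eq]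

theorem quadratic_mem_cDifferentialTranslateSubmodule {m : ℕ} {c : K} (hc : c ^ p = c)
    (hc1 : c ≠ 1) (a : Fin m × Fin m → K) (b : Fin m → K) :
    (fun x => (∑ ij : Fin m × Fin m, a ij * x ^ (p ^ (ij.1 : ℕ) + p ^ (ij.2 : ℕ)))
        + ∑ i : Fin m, b i * x ^ p ^ (i : ℕ)) ∈ cDifferentialTranslateSubmodule c := by
  let frob (i : ℕ) : K →+ K := iterateFrobenius K p i
  have hquad : ∀ ij : Fin m × Fin m, (fun x : K => x ^ (p ^ (ij.1 : ℕ) + p ^ (ij.2 : ℕ))) =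
      fun x => frob ij.1 x * frob ij.2 x := fun ij => by
    ext x
    simp [frob, iterateFrobenius_def, pow_add]
  have hlin : ∀ i : Fin m, (fun x : K => x ^ p ^ (i : ℕ)) = ⇑(frob i) := fun i => by
    ext x
    simp [frob, iterateFrobenius_def]
  have hsum : (fun x => (∑ ij : Fin m × Fin m, a ij * x ^ (p ^ (ij.1 : ℕ) + p ^ (ij.2 : ℕ)))
        + ∑ i : Fin m, b i * x ^ p ^ (i : ℕ)) =
      (∑ ij, a ij • fun x : K => x ^ (p ^ (ij.1 : ℕ) + p ^ (ij.2 : ℕ)))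
        + ∑ i, b i • fun x : K => x ^ p ^ (i : ℕ) := by
    ext x
    simp [Finset.sum_apply]
  rw [hsum]
  refine add_mem (Submodule.sum_mem _ fun ij _ => Submodule.smul_mem _ _ ?_)
    (Submodule.sum_mem _ fun i _ => Submodule.smul_mem _ _ ?_)
  · rw [hquad]
    exact AddMonoidHom.mul_mem_cDifferentialTranslateSubmodule hc1 _ _
      (iterateFrobenius_one_sub_mul hc _) (iterateFrobenius_one_sub_mul hc _)
  · rw [hlin]
    exact AddMonoidHom.coe_mem_cDifferentialTranslateSubmodule _ c

end Frobenius

theorem stmt_1_general (p m : ℕ) (hp : p.Prime)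
    (K : Type*) [Field K] [Fintype K] (hK : Fintype.card K = p ^ m)
    (f : K → K)
    (hf : ∃ (a : Fin m × Fin m → K) (b : Fin m → K), ∀ x : K,
      f x = (∑ ij : Fin m × Fin m, a ij * x ^ (p ^ (ij.1 : ℕ) + p ^ (ij.2 : ℕ)))
        + ∑ i : Fin m, b i * x ^ p ^ (i : ℕ))
    (c : K) (hc : c ^ p = c) (hc1 : c ≠ 1)
    (h2to1 : ∀ b : K, {x : K | f x = b}.ncard ≤ 2) :
    ∀ a b : K, {x : K | f (x + a) - c * f x = b}.ncard ≤ 2 := by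
  intro a b
  obtain ⟨co, li, hfc⟩ := hf
  have : Fact p.Prime := ⟨hp⟩
  have : CharP K p := charP_of_card_eq_prime_pow hK
  have hmem : f ∈ cDifferentialTranslateSubmodule c := by
    rw [funext hfc]
    exact quadratic_mem_cDifferentialTranslateSubmodule hc hc1 co li
  obtain ⟨t, ht⟩ := ncard_cDifferential_eq_ncard_fiber hc1 hmem a b
  exact ht ▸ h2to1 t

/-- A quadratic function over `F_{p^m}` in which every element has at most
two preimages is APcN for every `c` in the prime field with `c ≠ 1`. -/
theorem stmt_1 (p m : ℕ) (hp : p.Prime) (hm : 1 ≤ m)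
    (K : Type*) [Field K] [Fintype K] (hK : Fintype.card K = p ^ m)
    (f : K → K)
    (hf : ∃ (a : Fin m × Fin m → K) (b : Fin m → K), ∀ x : K,
      f x = (∑ ij : Fin m × Fin m, a ij * x ^ (p ^ (ij.1 : ℕ) + p ^ (ij.2 : ℕ)))
        + ∑ i : Fin m, b i * x ^ p ^ (i : ℕ))
    (c : K) (hc : c ^ p = c) (hc1 : c ≠ 1)
    (h2to1 : ∀ b : K, {x : K | f x = b}.ncard ≤ 2) :
    ∀ a b : K, {x : K | f (x + a) - c * f x = b}.ncard ≤ 2 :=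
  stmt_1_general p m hp K hK f hf c hc hc1 h2to1
end

section
/- Let p be an odd prime, m ≥ 1, K = F_{p^m}, and c ∈ K with c^p = c and c ≠ 1. Let f : K → K be a Dembowski–Ostrom polynomial, i.e. f(x) = Σ_{0≤i≤j≤m−1} a_{ij}·x^{p^i+p^j} for some a_{ij} ∈ K. Then f is APcN with respect to c (for all a, b ∈ K the equation f(x+a) − c·f(x) = b has at most two solutions) if and only if f is planar (for every a ∈ K, a ≠ 0, the map x ↦ f(x+a) − f(x) is a bijection of K). -/
/-!
A Dembowski–Ostrom polynomial `f` is a quadratic form on `K` over `𝔽_p`, with polar form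
`B x y = f (x + y) - f x - f y`. For `c ∈ 𝔽_p`, `c ≠ 1`, the map `x ↦ f (x + a) - c f x` is, up
to the translation by `a / (1 - c)`, the map `(1 - c) f` plus a constant, so `f` is APcN iff
every fibre of `f` has at most two points, i.e. (as `f` is even) iff `f x = f y` forces
`x = ± y`. Writing `x = u + v`, `y = u - v` turns `f x - f y` into `2 B u v`, so this says that
`B u v = 0` only when `u = 0` or `v = 0`. Since `f (x + a) - f x = B x a + f a`, that is
injectivity, hence bijectivity, of every derivative of `f`.
-/

open Function

theorem forall_ncard_setOf_eq_le_two_iff {G N : Type*} [AddGroup G] [Finite G] {f : G → N}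
    (hf : ∀ x, f (-x) = f x) (hG : ∀ x : G, -x = x → x = 0) :
    (∀ t, {x | f x = t}.ncard ≤ 2) ↔ ∀ x y, f x = f y → x = y ∨ x = -y := by
  constructor
  · intro hle
    have key : ∀ x y, f x = f y → y ≠ 0 → x = y ∨ x = -y := by
      intro x y hxy hy
      by_contra! hne
      have hsub : ({x, y, -y} : Set G) ⊆ {z | f z = f y} := by
        rintro z (rfl | rfl | rfl)
        exacts [hxy, rfl, hf y]
      have hcard : ({x, y, -y} : Set G).ncard = 3 :=
        Set.ncard_eq_three.mpr ⟨x, y, -y, hne.1, hne.2, fun h => hy (hG y h.symm), rfl⟩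
      have hle3 := Set.ncard_le_ncard hsub
      have hle2 := hle (f y)
      omega
    intro x y hxy
    by_cases hy : y = 0
    · by_cases hx : x = 0
      · exact .inl (hx.trans hy.symm)
      · rcases key y x hxy.symm hx with h | h
        · exact .inl h.symm
        · exact .inr (by rw [h, neg_neg])
    · exact key x y hxy hy
  · intro h t
    rcases Set.eq_empty_or_nonempty {x | f x = t} with he | ⟨y, hy⟩
    · simp [he]
    · have hsub : {x | f x = t} ⊆ {y, -y} := fun x hx => h x y (hx.trans hy.symm)
      calc {x | f x = t}.ncard ≤ ({y, -y} : Set G).ncard := Set.ncard_le_ncard hsub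
        _ ≤ ({-y} : Set G).ncard + 1 := Set.ncard_insert_le _ _
        _ = 2 := by rw [Set.ncard_singleton]

namespace QuadraticMap

section CommRing

variable {R M N : Type*} [CommRing R] [AddCommGroup M] [Module R M] [AddCommGroup N] [Module R N]
  (Q : QuadraticMap R M N)

theorem map_add_eq_add_polar (x y : M) : Q (x + y) = Q x + Q y + polar Q x y := by
  rw [polar]; abel

theorem map_add_sub_map_sub (u v : M) : Q (u + v) - Q (u - v) = (2 : R) • polar Q u v := by
  calc Q (u + v) - Q (u - v) = polar Q u v - polar Q u (-v) := by
        simp only [polar, sub_eq_add_neg, QuadraticMap.map_neg]; abel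
    _ = (2 : R) • polar Q u v := by rw [polar_neg_right, sub_neg_eq_add, two_smul]

theorem injective_map_add_sub_map_iff (a : M) :
    Injective (fun x => Q (x + a) - Q x) ↔ ∀ u, polar Q u a = 0 → u = 0 := by
  have hdiff : ∀ x, Q (x + a) - Q x = polar Q x a + Q a := fun x => by
    rw [map_add_eq_add_polar]; abel
  simp only [Injective, hdiff, add_left_inj]
  refine ⟨fun h u hu => h (by rw [hu, polar_zero_left]), fun h x y hxy => ?_⟩
  exact sub_eq_zero.mp (h _ (by rw [polar_sub_left, hxy, sub_self]))

theorem forall_injective_map_add_sub_map_iff :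
    (∀ a ≠ 0, Injective (fun x => Q (x + a) - Q x)) ↔
      ∀ u v, polar Q u v = 0 → u = 0 ∨ v = 0 := by
  simp only [injective_map_add_sub_map_iff]
  exact ⟨fun h u v huv => or_iff_not_imp_right.mpr fun hv => h v hv u huv,
    fun h a ha u hu => (h u a hu).resolve_right ha⟩

end CommRing

section Field

variable {R M N : Type*} [Field R] [AddCommGroup M] [Module R M] [AddCommGroup N] [Module R N]
  (Q : QuadraticMap R M N)

theorem forall_map_eq_map_imp_eq_or_eq_neg_iff (h2 : (2 : R) ≠ 0) :
    (∀ x y, Q x = Q y → x = y ∨ x = -y) ↔ ∀ u v, polar Q u v = 0 → u = 0 ∨ v = 0 := by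
  have hpolar : ∀ u v, polar Q u v = 0 ↔ Q (u + v) = Q (u - v) := fun u v => by
    rw [← sub_eq_zero (a := Q (u + v)), map_add_sub_map_sub, smul_eq_zero, or_iff_right h2]
  have htwo : ∀ w : M, w + w = 0 → w = 0 := fun w hw =>
    (smul_eq_zero.mp ((two_smul R w).trans hw)).resolve_left h2
  constructor
  · intro h u v huv
    rcases h _ _ ((hpolar u v).mp huv) with h' | h'
    · refine .inr (htwo v ?_)
      rw [show v + v = u + v - (u - v) by abel, h', sub_self]
    · refine .inl (htwo u ?_)
      rw [show u + u = u + v + (u - v) by abel, h', neg_add_cancel]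
  · intro h x y hxy
    set u := (2 : R)⁻¹ • (x + y)
    set v := (2 : R)⁻¹ • (x - y)
    have hx : u + v = x := by simp only [u, v]; match_scalars <;> field_simp <;> ring
    have hy : u - v = y := by simp only [u, v]; match_scalars <;> field_simp <;> ring
    rcases h u v ((hpolar u v).mpr (by rw [hx, hy, hxy])) with hu | hv
    · right
      rw [← hx, ← hy, hu, zero_add, zero_sub, neg_neg]
    · left
      rw [← hx, ← hy, hv, add_zero, sub_zero]

theorem setOf_map_add_sub_smul_map_eq {c : R} (hc : c ≠ 1) (a : M) (b : N) :
    {x | Q (x + a) - c • Q x = b} =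
      (· + (1 - c)⁻¹ • a) ⁻¹'
        {y | Q y = (1 - c)⁻¹ • (b - Q a) + Q ((1 - c)⁻¹ • a)} := by
  have hc' : 1 - c ≠ 0 := sub_ne_zero.mpr hc.symm
  have key : ∀ x, Q (x + a) - c • Q x =
      (1 - c) • (Q (x + (1 - c)⁻¹ • a) - Q ((1 - c)⁻¹ • a)) + Q a := fun x => by
    rw [map_add_eq_add_polar, map_add_eq_add_polar, polar_smul_right]
    match_scalars <;> simp [hc']
  ext x
  rw [Set.mem_ofPred_eq, Set.mem_preimage, Set.mem_ofPred_eq, key, ← sub_eq_iff_eq_add,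
    eq_inv_smul_iff₀ hc', eq_sub_iff_add_eq]

theorem forall_ncard_setOf_map_add_sub_smul_map_le_two_iff [Finite M] {c : R}
    (hc : c ≠ 1) :
    (∀ a b, {x | Q (x + a) - c • Q x = b}.ncard ≤ 2) ↔ ∀ t, {x | Q x = t}.ncard ≤ 2 := by
  constructor
  · intro h t
    have hfiber : {x | Q (x + 0) - c • Q x = (1 - c) • t} = {x | Q x = t} := by
      ext x
      have hQx : Q x - c • Q x = (1 - c) • Q x := by rw [sub_smul, one_smul]
      rw [Set.mem_ofPred_eq, Set.mem_ofPred_eq, add_zero, hQx,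
        smul_right_inj (sub_ne_zero.mpr hc.symm)]
    exact hfiber ▸ h 0 ((1 - c) • t)
  · intro h a b
    rw [setOf_map_add_sub_smul_map_eq Q hc,
      Set.ncard_preimage_of_injective_subset_range (add_left_injective _)
        fun y _ => ⟨y - _, sub_add_cancel y _⟩]
    exact h _

theorem forall_ncard_le_two_iff_forall_bijective [Finite M] (Q : QuadraticMap R M M)
    (h2 : (2 : R) ≠ 0) {c : R} (hc : c ≠ 1) :
    (∀ a b, {x | Q (x + a) - c • Q x = b}.ncard ≤ 2) ↔
      ∀ a ≠ 0, Bijective (fun x => Q (x + a) - Q x) := by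
  have hM : ∀ x : M, -x = x → x = 0 := fun x hx =>
    (smul_eq_zero.mp ((two_smul R x).trans (neg_eq_iff_add_eq_zero.mp hx))).resolve_left h2
  rw [forall_ncard_setOf_map_add_sub_smul_map_le_two_iff Q hc,
    forall_ncard_setOf_eq_le_two_iff Q.map_neg hM, forall_map_eq_map_imp_eq_or_eq_neg_iff Q h2,
    ← forall_injective_map_add_sub_map_iff]
  exact forall₂_congr fun a _ => Finite.injective_iff_bijective

end Field

end QuadraticMap

section DembowskiOstrom

variable (p : ℕ) [Fact p.Prime] {K : Type*} [Field K] [Algebra (ZMod p) K]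

def iterateFrobeniusLinearMap (n : ℕ) : K →ₗ[ZMod p] K where
  toFun x := x ^ p ^ n
  map_add' x y := by
    have : CharP K p := (Algebra.charP_iff (ZMod p) K p).mp inferInstance
    exact add_pow_char_pow x y p n
  map_smul' r x := by simp [Algebra.smul_def, mul_pow, ← map_pow, ZMod.pow_card_pow]

def dembowskiOstrom {m : ℕ} (a : Fin m → Fin m → K) : QuadraticMap (ZMod p) K K :=
  ∑ i, ∑ j, a i j • QuadraticMap.linMulLin (iterateFrobeniusLinearMap p i)
    (iterateFrobeniusLinearMap p j)

theorem dembowskiOstrom_apply {m : ℕ} (a : Fin m → Fin m → K) (x : K) :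
    dembowskiOstrom p a x = ∑ i, ∑ j, a i j * x ^ (p ^ (i : ℕ) + p ^ (j : ℕ)) := by
  simp [dembowskiOstrom, iterateFrobeniusLinearMap, pow_add]

end DembowskiOstrom

theorem stmt_2_general (p m : ℕ) (hp : p.Prime) (hodd : Odd p)
    (K : Type*) [Field K] [Fintype K] (hK : Fintype.card K = p ^ m)
    (f : K → K)
    (hf : ∃ a : Fin m → Fin m → K, ∀ x : K,
      f x = ∑ i : Fin m, ∑ j : Fin m,
        if (i : ℕ) ≤ (j : ℕ) then a i j * x ^ (p ^ (i : ℕ) + p ^ (j : ℕ)) else 0)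
    (c : K) (hc : c ^ p = c) (hc1 : c ≠ 1) :
    (∀ a b : K, {x : K | f (x + a) - c * f x = b}.ncard ≤ 2)
      ↔ (∀ a : K, a ≠ 0 → Function.Bijective (fun x : K => f (x + a) - f x)) := by
  have := Fact.mk hp
  have := charP_of_card_eq_prime_pow hK
  let := ZMod.algebra K p
  obtain ⟨a, rfl⟩ : ∃ a : Fin m → Fin m → K, f = dembowskiOstrom p a := by
    obtain ⟨a, ha⟩ := hf
    exact ⟨fun i j => if (i : ℕ) ≤ (j : ℕ) then a i j else 0,
      funext fun x => by simp [ha, dembowskiOstrom_apply, ite_mul]⟩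
  obtain ⟨n, rfl⟩ :=
    (mem_bot_iff_intCast p K).mp ((Subfield.mem_bot_iff_pow_eq_self K p).mpr hc)
  have hsmul : ∀ y : K, (n : K) * y = (n : ZMod p) • y := fun y => by
    rw [Algebra.smul_def, map_intCast]
  have htwo : (2 : ZMod p) ≠ 0 := Ring.two_ne_zero (by
    rw [ZMod.ringChar_zmod_n]; rintro rfl; exact Nat.not_even_iff_odd.mpr hodd even_two)
  have hn : (n : ZMod p) ≠ 1 := fun h => hc1 <| by
    rw [← map_intCast (algebraMap (ZMod p) K), h, map_one]
  simp only [hsmul]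
  exact QuadraticMap.forall_ncard_le_two_iff_forall_bijective _ htwo hn

/-- For `p` odd, a Dembowski–Ostrom polynomial over `F_{p^m}` is APcN
(with respect to any prime-field `c ≠ 1`) if and only if it is planar. -/
theorem stmt_2 (p m : ℕ) (hp : p.Prime) (hodd : Odd p) (hm : 1 ≤ m)
    (K : Type*) [Field K] [Fintype K] (hK : Fintype.card K = p ^ m)
    (f : K → K)
    (hf : ∃ a : Fin m → Fin m → K, ∀ x : K,
      f x = ∑ i : Fin m, ∑ j : Fin m,
        if (i : ℕ) ≤ (j : ℕ) then a i j * x ^ (p ^ (i : ℕ) + p ^ (j : ℕ)) else 0)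
    (c : K) (hc : c ^ p = c) (hc1 : c ≠ 1) :
    (∀ a b : K, {x : K | f (x + a) - c * f x = b}.ncard ≤ 2)
      ↔ (∀ a : K, a ≠ 0 → Function.Bijective (fun x : K => f (x + a) - f x)) :=
  stmt_2_general p m hp hodd K hK f hf c hc hc1
end

section
/- Let p be a prime, m ≥ 1, K = F_{p^m}, c ∈ K with c^p = c and c ≠ 1, and let f : K → K be a quadratic function (with zero constant term). Then f is a bijection of K if and only if f is PcN with respect to c, i.e., if and only if for every a ∈ K the map x ↦ f(x+a) − c·f(x) is a bijection of K. -/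
/-!
Write `u = 1 - c`, a nonzero element of the prime field. The polar form
`polar f x y = f (x + y) - f x - f y` of a quadratic function is a sum of products of Frobenius
powers of `x` and `y`, hence commutes with scaling `y` by prime-field elements. This gives
`f (x + a) - c f x = u f (x + a / u) + (f a - u f (a / u))`,
so each map `x ↦ f (x + a) - c f x` is `f` pre-composed with a translation and post-composed with
an affine bijection. For `a = 0` it is `u f`, which gives the converse.
-/

open Function QuadraticMap

section PolarHomogeneous

variable {K : Type*} [Field K] {f : K → K} {c : K}

theorem sub_mul_eq_of_polar_mul_right (hc : c ≠ 1)
    (hpolar : ∀ x y, polar f x ((1 - c) * y) = (1 - c) * polar f x y) (a x : K) :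
    f (x + a) - c * f x
      = (1 - c) * f (x + (1 - c)⁻¹ * a) + (f a - (1 - c) * f ((1 - c)⁻¹ * a)) := by
  have h := hpolar x ((1 - c)⁻¹ * a)
  rw [mul_inv_cancel_left₀ (sub_ne_zero.mpr hc.symm)] at h
  unfold polar at h
  linear_combination h

theorem bijective_iff_forall_bijective_sub_mul (hc : c ≠ 1)
    (hpolar : ∀ x y, polar f x ((1 - c) * y) = (1 - c) * polar f x y) :
    Bijective f ↔ ∀ a, Bijective fun x => f (x + a) - c * f x := by
  have hu : 1 - c ≠ 0 := sub_ne_zero.mpr hc.symm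
  constructor
  · intro hf a
    have heq : (fun x => f (x + a) - c * f x)
        = (· + (f a - (1 - c) * f ((1 - c)⁻¹ * a))) ∘ ((1 - c) * ·) ∘ f
          ∘ (· + (1 - c)⁻¹ * a) :=
      funext (sub_mul_eq_of_polar_mul_right hc hpolar a)
    rw [heq]
    exact (Equiv.addRight _).bijective.comp <| (Equiv.mulLeft₀ _ hu).bijective.comp <|
      hf.comp (Equiv.addRight _).bijective
  · intro h
    have heq : (fun x => f (x + 0) - c * f x) = ((1 - c) * ·) ∘ f := by
      funext x
      simp only [add_zero, comp_apply]
      ring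
    rw [← (Equiv.mulLeft₀ _ hu).bijective.of_comp_iff' f]
    exact heq ▸ h 0

end PolarHomogeneous

theorem pow_pow_eq_self_of_pow_eq_self {M : Type*} [Monoid M] {x : M} {p : ℕ} (h : x ^ p = x)
    (n : ℕ) : x ^ p ^ n = x := by
  induction n with
  | zero => simp
  | succ n ih => rw [pow_succ, pow_mul, ih, h]

section Quadratic

variable {K : Type*} [CommRing K] {p m : ℕ} [Fact p.Prime] [CharP K p] {f : K → K}
  {a : Fin m × Fin m → K} {b : Fin m → K}

theorem polar_eq_sum_of_forall_eq
    (hf : ∀ x : K, f x = (∑ ij : Fin m × Fin m, a ij * x ^ (p ^ (ij.1 : ℕ) + p ^ (ij.2 : ℕ)))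
        + ∑ i : Fin m, b i * x ^ p ^ (i : ℕ)) (x y : K) :
    polar f x y = ∑ ij : Fin m × Fin m, a ij * (x ^ p ^ (ij.1 : ℕ) * y ^ p ^ (ij.2 : ℕ)
      + y ^ p ^ (ij.1 : ℕ) * x ^ p ^ (ij.2 : ℕ)) := by
  simp only [polar, hf, pow_add, add_pow_char_pow, mul_add, add_mul, Finset.sum_add_distrib]
  ring

theorem polar_mul_right_of_forall_eq
    (hf : ∀ x : K, f x = (∑ ij : Fin m × Fin m, a ij * x ^ (p ^ (ij.1 : ℕ) + p ^ (ij.2 : ℕ)))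
        + ∑ i : Fin m, b i * x ^ p ^ (i : ℕ))
    {t : K} (ht : t ^ p = t) (x y : K) : polar f x (t * y) = t * polar f x y := by
  simp only [polar_eq_sum_of_forall_eq hf, mul_pow, pow_pow_eq_self_of_pow_eq_self ht,
    Finset.mul_sum]
  exact Finset.sum_congr rfl fun _ _ => by ring

end Quadratic

theorem stmt_3_general (p m : ℕ) (hp : p.Prime)
    (K : Type*) [Field K] [Fintype K] (hK : Fintype.card K = p ^ m)
    (f : K → K)
    (hf : ∃ (a : Fin m × Fin m → K) (b : Fin m → K), ∀ x : K,
      f x = (∑ ij : Fin m × Fin m, a ij * x ^ (p ^ (ij.1 : ℕ) + p ^ (ij.2 : ℕ)))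
        + ∑ i : Fin m, b i * x ^ p ^ (i : ℕ))
    (c : K) (hc : c ^ p = c) (hc1 : c ≠ 1) :
    Function.Bijective f
      ↔ (∀ a : K, Function.Bijective (fun x : K => f (x + a) - c * f x)) := by
  obtain ⟨a, b, hf⟩ := hf
  have : Fact p.Prime := ⟨hp⟩
  have : CharP K p := charP_of_card_eq_prime_pow hK
  have hu : (1 - c) ^ p = 1 - c := by rw [sub_pow_char, one_pow, hc]
  exact bijective_iff_forall_bijective_sub_mul hc1 (polar_mul_right_of_forall_eq hf hu)

/-- A quadratic function over `F_{p^m}` is a bijection if and only if it is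
PcN with respect to a prime-field constant `c ≠ 1`. -/
theorem stmt_3 (p m : ℕ) (hp : p.Prime) (hm : 1 ≤ m)
    (K : Type*) [Field K] [Fintype K] (hK : Fintype.card K = p ^ m)
    (f : K → K)
    (hf : ∃ (a : Fin m × Fin m → K) (b : Fin m → K), ∀ x : K,
      f x = (∑ ij : Fin m × Fin m, a ij * x ^ (p ^ (ij.1 : ℕ) + p ^ (ij.2 : ℕ)))
        + ∑ i : Fin m, b i * x ^ p ^ (i : ℕ))
    (c : K) (hc : c ^ p = c) (hc1 : c ≠ 1) :
    Function.Bijective f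
      ↔ (∀ a : K, Function.Bijective (fun x : K => f (x + a) - c * f x)) :=
  stmt_3_general p m hp K hK f hf c hc hc1
end

section
/- Let K be a finite field of characteristic 2 and let c ∈ K with c ≠ 1. Let f : K → K be a function such that for every γ ∈ K with γ ≠ 0 the map x ↦ f(x+γ) + c·f(x) is a bijection of K. Then f itself is a bijection of K. -/
open Function

/-- In characteristic 2 the points `a` and `b` are swapped by the shift `x ↦ x + (a + b)`, so
`f a = f b` makes the `c`-derivative of `f` in direction `a + b` agree at `a` and at `b`. -/
theorem injective_of_forall_injective_cDerivative {R : Type*} [Ring R] [CharP R 2] (c : R)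
    (f : R → R) (h : ∀ γ : R, γ ≠ 0 → Injective fun x : R => f (x + γ) + c * f x) :
    Injective f := by
  intro a b hab
  by_contra hne
  have hγ : a + b ≠ 0 := fun h0 => hne (CharTwo.add_eq_zero.mp h0)
  have hswap : b + (a + b) = a := by rw [add_comm a b, CharTwo.add_cancel_left]
  refine hne (h (a + b) hγ ?_)
  simp only [CharTwo.add_cancel_left, hswap, hab]

theorem stmt_4_general (K : Type*) [Field K] [Fintype K] [CharP K 2]
    (c : K) (f : K → K)
    (h : ∀ γ : K, γ ≠ 0 → Function.Bijective (fun x : K => f (x + γ) + c * f x)) :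
    Function.Bijective f :=
  Finite.injective_iff_bijective.mp
    (injective_of_forall_injective_cDerivative c f fun γ hγ => (h γ hγ).injective)

/-- Over a finite field of characteristic 2, if all nonzero-direction
`c`-derivatives of `f` (with `c ≠ 1`) are bijections, then `f` itself is a bijection. -/
theorem stmt_4 (K : Type*) [Field K] [Fintype K] [CharP K 2]
    (c : K) (hc : c ≠ 1) (f : K → K)
    (h : ∀ γ : K, γ ≠ 0 → Function.Bijective (fun x : K => f (x + γ) + c * f x)) :
    Function.Bijective f :=
  stmt_4_general K c f h
end

section
/- Fix a prime p, integers m, n ≥ 1, set q = p^m, and let K be a finite field with q^n elements. Let φ(x) = Σ_{i=0}^{n−1} a_i·x^{q^i} with all a_i ∈ F_q = {x ∈ K : x^q = x}, let g : K → K be an arbitrary function, let b ∈ F_q, b ≠ 0, and define f₁(x) = b·φ(x) + Tr(g(x^q − x)), where Tr(y) = Σ_{i=0}^{n−1} y^{q^i}. If f₁ is a bijection of K, then f₁ is PcN with respect to every c ∈ F_q with c ≠ 1: for every such c and every γ ∈ K, the map x ↦ f₁(x+γ) − c·f₁(x) is a bijection of K. -/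
/-!
Let `σ x = x ^ q` and let `F` be its fixed field. Since `x ↦ x ^ q - x` kills `F` and the trace
takes values in `F`, `f₁ (x + u) = f₁ x + λ u` for `u ∈ F`, with `λ = b · ∑ aᵢ ∈ F`, and `λ ≠ 0` by
injectivity. If `D x = f₁ (x + γ) - c f₁ x` takes the same value at `x` and `y`, then `(1 - c) b (φ x - φ y)`
lies in `F`, hence so does `f₁ x - f₁ y`; injectivity of `f₁` on the coset `y + F` then gives
`x = y + u` with `u ∈ F`, and `D (y + u) = D y + (1 - c) λ u` forces `u = 0`.
-/

open Function

section AffineOnCosets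

variable {K : Type*} [Field K] {F : Subfield K} {f : K → K} {l : K}

theorem ne_zero_of_injective_of_map_add_mem (hinj : Injective f)
    (hf : ∀ x, ∀ u ∈ F, f (x + u) = f x + l * u) : l ≠ 0 := by
  rintro rfl
  have h := hf 0 1 F.one_mem
  rw [zero_add, zero_mul, add_zero] at h
  exact one_ne_zero (hinj h)

theorem sub_mem_of_map_sub_mem (hinj : Injective f)
    (hf : ∀ x, ∀ u ∈ F, f (x + u) = f x + l * u) (hl : l ∈ F) {x y : K}
    (hxy : f x - f y ∈ F) : x - y ∈ F := by
  have hu : (f x - f y) / l ∈ F := F.div_mem hxy hl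
  have hfu : f (y + (f x - f y) / l) = f x := by
    rw [hf y _ hu, mul_div_cancel₀ _ (ne_zero_of_injective_of_map_add_mem hinj hf)]
    ring
  rwa [← hinj hfu, add_sub_cancel_left]

theorem injective_map_add_sub_mul (hinj : Injective f)
    (hf : ∀ x, ∀ u ∈ F, f (x + u) = f x + l * u) (hl : l ∈ F) {c : K} (hc1 : c ≠ 1) (γ : K)
    (hD : ∀ x y, f (x + γ) - c * f x = f (y + γ) - c * f y → f x - f y ∈ F) :
    Injective fun x => f (x + γ) - c * f x := by
  intro x y hxy
  obtain ⟨u, hu, rfl⟩ : ∃ u ∈ F, x = y + u :=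
    ⟨x - y, sub_mem_of_map_sub_mem hinj hf hl (hD x y hxy), by ring⟩
  have hlu : (1 - c) * l * u = 0 := by
    dsimp only at hxy
    rw [add_right_comm, hf _ _ hu, hf _ _ hu] at hxy
    linear_combination hxy
  have hcl : (1 - c) * l ≠ 0 :=
    mul_ne_zero (sub_ne_zero.2 hc1.symm) (ne_zero_of_injective_of_map_add_mem hinj hf)
  rw [(mul_eq_zero.1 hlu).resolve_left hcl, add_zero]

variable {ψ T : K → K}

theorem map_add_of_mem_of_eq_add (hf : ∀ x, f x = ψ x + T x)
    (hψ : ∀ x y, ψ (x + y) = ψ x + ψ y) (hψF : ∀ u ∈ F, ψ u = l * u)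
    (hT : ∀ x, ∀ u ∈ F, T (x + u) = T x) (x : K) : ∀ u ∈ F, f (x + u) = f x + l * u := by
  intro u hu
  rw [hf, hf, hψ, hψF u hu, hT x u hu]
  ring

theorem map_sub_mem_of_eq_add (hf : ∀ x, f x = ψ x + T x)
    (hψ : ∀ x y, ψ (x + y) = ψ x + ψ y) (hTF : ∀ x, T x ∈ F) {c : K} (hc : c ∈ F)
    (hc1 : c ≠ 1) {γ x y : K} (h : f (x + γ) - c * f x = f (y + γ) - c * f y) :
    f x - f y ∈ F := by
  have key : (1 - c) * (ψ x - ψ y) = T (y + γ) - T (x + γ) - c * (T y - T x) := by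
    rw [hf, hf, hf, hf, hψ, hψ] at h
    linear_combination h
  have hψxy : ψ x - ψ y ∈ F := by
    have : (1 - c)⁻¹ * ((1 - c) * (ψ x - ψ y)) ∈ F := by
      rw [key]
      refine F.mul_mem (F.inv_mem (F.sub_mem F.one_mem hc)) ?_
      exact F.sub_mem (F.sub_mem (hTF _) (hTF _)) (F.mul_mem hc (F.sub_mem (hTF _) (hTF _)))
    rwa [inv_mul_cancel_left₀ (sub_ne_zero.2 hc1.symm)] at this
  rw [hf, hf, add_sub_add_comm]
  exact F.add_mem hψxy (F.sub_mem (hTF x) (hTF y))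

end AffineOnCosets

namespace RingHom

variable {K : Type*} [Field K] (σ : K →+* K)

def fixedSubfield : Subfield K := σ.eqLocusField (RingHom.id K)

@[simp]
theorem mem_fixedSubfield {x : K} : x ∈ σ.fixedSubfield ↔ σ x = x := Iff.rfl

theorem pow_apply_of_mem_fixedSubfield {u : K} (hu : u ∈ σ.fixedSubfield) (i : ℕ) :
    (σ ^ i) u = u := by
  rw [coe_pow]
  exact iterate_fixed hu i

theorem sum_pow_apply_mem_fixedSubfield {n : ℕ} {y : K} (hy : (σ ^ n) y = y) :
    ∑ i : Fin n, (σ ^ (i : ℕ)) y ∈ σ.fixedSubfield := by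
  have hshift : ∀ i, σ ((σ ^ i) y) = (σ ^ (i + 1)) y := fun i => by
    rw [coe_pow, coe_pow, iterate_succ_apply']
  rw [mem_fixedSubfield, Fin.sum_univ_eq_sum_range (fun i => (σ ^ i) y), map_sum]
  simp only [hshift]
  have h1 := Finset.sum_range_succ' (fun i => (σ ^ i) y) n
  have h2 := Finset.sum_range_succ (fun i => (σ ^ i) y) n
  rw [pow_zero, one_def, id_apply] at h1
  rw [hy] at h2
  linear_combination h2 - h1

end RingHom

theorem FiniteField.exists_ringHom_pow_apply_eq_pow_pow {K : Type*} [Field K] [Fintype K]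
    {q n : ℕ} (hK : Fintype.card K = q ^ n) : ∃ σ : K →+* K, ∀ i x, (σ ^ i) x = x ^ q ^ i := by
  obtain ⟨k, hr, hk⟩ := FiniteField.card K (ringChar K)
  have : Fact (ringChar K).Prime := ⟨hr⟩
  have hn : n ≠ 0 := by
    rintro rfl
    exact (Fintype.one_lt_card (α := K)).ne' (by rw [hK, pow_zero])
  obtain ⟨j, -, rfl⟩ := (Nat.dvd_prime_pow hr).1 (hk ▸ hK ▸ dvd_pow_self q hn)
  refine ⟨iterateFrobenius K (ringChar K) j, fun i x => ?_⟩
  rw [RingHom.coe_pow, ← iterateFrobenius_mul_apply, iterateFrobenius_def, pow_mul]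

theorem injective_map_add_sub_mul_of_linearized {K : Type*} [Field K] (σ : K →+* K) {n : ℕ}
    (hσn : ∀ x, (σ ^ n) x = x) (a : Fin n → K) (ha : ∀ i, σ (a i) = a i) (g : K → K)
    {b : K} (hb : σ b = b) {f : K → K}
    (hf : ∀ x, f x = b * ∑ i, a i * (σ ^ (i : ℕ)) x + ∑ i : Fin n, (σ ^ (i : ℕ)) (g (σ x - x)))
    (hinj : Injective f) {c : K} (hc : σ c = c) (hc1 : c ≠ 1) (γ : K) :
    Injective fun x => f (x + γ) - c * f x := by
  have hψ : ∀ x y, b * ∑ i : Fin n, a i * (σ ^ (i : ℕ)) (x + y)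
      = b * ∑ i : Fin n, a i * (σ ^ (i : ℕ)) x + b * ∑ i : Fin n, a i * (σ ^ (i : ℕ)) y := by
    intro x y
    simp only [map_add, mul_add, Finset.sum_add_distrib]
  have hψF : ∀ u ∈ σ.fixedSubfield,
      b * ∑ i : Fin n, a i * (σ ^ (i : ℕ)) u = (b * ∑ i, a i) * u := by
    intro u hu
    simp only [σ.pow_apply_of_mem_fixedSubfield hu, Finset.sum_mul, mul_assoc]
  have hTF : ∀ x, ∑ i : Fin n, (σ ^ (i : ℕ)) (g (σ x - x)) ∈ σ.fixedSubfield :=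
    fun x => σ.sum_pow_apply_mem_fixedSubfield (hσn _)
  have hT : ∀ x, ∀ u ∈ σ.fixedSubfield, ∑ i : Fin n, (σ ^ (i : ℕ)) (g (σ (x + u) - (x + u)))
      = ∑ i : Fin n, (σ ^ (i : ℕ)) (g (σ x - x)) := by
    intro x u hu
    rw [map_add, σ.mem_fixedSubfield.1 hu, add_sub_add_right_eq_sub]
  have hl : b * ∑ i, a i ∈ σ.fixedSubfield :=
    σ.fixedSubfield.mul_mem hb (σ.fixedSubfield.sum_mem fun i _ => ha i)
  exact injective_map_add_sub_mul hinj (map_add_of_mem_of_eq_add hf hψ hψF hT) hl hc1 γ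
    fun x y h => map_sub_mem_of_eq_add hf hψ hTF hc hc1 h

theorem stmt_5_general (n : ℕ) (q : ℕ)
    (K : Type*) [Field K] [Fintype K] (hK : Fintype.card K = q ^ n)
    (a : Fin n → K) (ha : ∀ i, a i ^ q = a i)
    (g : K → K) (b : K) (hb : b ^ q = b)
    (f₁ : K → K)
    (hf₁ : ∀ x : K, f₁ x = b * (∑ i : Fin n, a i * x ^ q ^ (i : ℕ))
        + ∑ i : Fin n, (g (x ^ q - x)) ^ q ^ (i : ℕ))
    (hbij : Function.Bijective f₁)
    (c : K) (hc : c ^ q = c) (hc1 : c ≠ 1) (γ : K) :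
    Function.Bijective (fun x : K => f₁ (x + γ) - c * f₁ x) := by
  obtain ⟨σ, hσ⟩ := FiniteField.exists_ringHom_pow_apply_eq_pow_pow hK
  have hσ1 : ∀ x, σ x = x ^ q := fun x => by simpa using hσ 1 x
  have hσn : ∀ x, (σ ^ n) x = x := fun x => by rw [hσ, ← hK, FiniteField.pow_card]
  refine Finite.injective_iff_bijective.mp <|
    injective_map_add_sub_mul_of_linearized σ hσn a (fun i => (hσ1 _).trans (ha i)) g
      ((hσ1 b).trans hb) (fun x => ?_) hbij.injective ((hσ1 c).trans hc) hc1 γ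
  simp only [hf₁, hσ, hσ1]

/-- If `f₁(x) = b·φ(x) + Tr(g(x^q − x))` (with `φ` an `F_q`-linear
polynomial with coefficients in `F_q` and `b ∈ F_q \ {0}`) is a bijection of
`K = F_{q^n}`, then `f₁` is PcN for every `c ∈ F_q`, `c ≠ 1`. -/
theorem stmt_5 (p m n : ℕ) (hp : p.Prime) (hm : 1 ≤ m) (hn : 1 ≤ n)
    (q : ℕ) (hq : q = p ^ m)
    (K : Type*) [Field K] [Fintype K] (hK : Fintype.card K = q ^ n)
    (a : Fin n → K) (ha : ∀ i, a i ^ q = a i)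
    (g : K → K) (b : K) (hb : b ^ q = b) (hb0 : b ≠ 0)
    (f₁ : K → K)
    (hf₁ : ∀ x : K, f₁ x = b * (∑ i : Fin n, a i * x ^ q ^ (i : ℕ))
        + ∑ i : Fin n, (g (x ^ q - x)) ^ q ^ (i : ℕ))
    (hbij : Function.Bijective f₁)
    (c : K) (hc : c ^ q = c) (hc1 : c ≠ 1) (γ : K) :
    Function.Bijective (fun x : K => f₁ (x + γ) - c * f₁ x) :=
  stmt_5_general n q K hK a ha g b hb f₁ hf₁ hbij c hc hc1 γ
end

section
/- Fix a prime p, integers m, n ≥ 1, set q = p^m, and let K be a finite field with q^n elements. Let φ(x) = Σ_{i=0}^{n−1} a_i·x^{q^i} with all a_i ∈ F_q = {x ∈ K : x^q = x}, let g : K → K be an arbitrary function, let b ∈ F_q, b ≠ 0, and define f₂(x) = b·φ(x) + (g(x^q − x))^{(q^n−1)/(q−1)}. If f₂ is a bijection of K, then f₂ is PcN with respect to every c ∈ F_q with c ≠ 1: for every such c and every γ ∈ K, the map x ↦ f₂(x+γ) − c·f₂(x) is a bijection of K. -/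
/-!
Let `F_q` be the fixed field of the `q`-Frobenius. The term `g (x ^ q - x) ^ N` takes values in
`F_q` (it is an `N`-th power with `N (q - 1) = q ^ n - 1`) and is constant on the cosets
`x + F_q`, while `φ` is additive with `φ r = A r` on `F_q`, where `A = ∑ aᵢ`. Hence
`f₂ (x + r) = f₂ x + b A r` for `r ∈ F_q`, and `b A ≠ 0` because `f₂` is injective.
If `x` and `y` have the same image under `f₂ (· + γ) - c f₂`, then `D = f₂ x - f₂ y` satisfies
`(c - 1) D ∈ F_q`, so `D ∈ F_q` and the coset formula gives `x = y + D / (b A)`; applying the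
formula once more at `y + γ` yields `D = c D`, so `D = 0` and `x = y`.
-/

open Function

section ShiftArgument

variable {K : Type*} [Field K] (F : Subfield K)

theorem injective_add_sub_mul_of_shift {f : K → K} {β c γ : K} (hβ : β ∈ F)
    (hshift : ∀ x, ∀ r ∈ F, f (x + r) = f x + β * r)
    (hderiv : ∀ x y, f (x + γ) - f (y + γ) - (f x - f y) ∈ F)
    (hf : Injective f) (hc : c ∈ F) (hc1 : c ≠ 1) :
    Injective fun x => f (x + γ) - c * f x := by
  intro x y hxy
  have hβ0 : β ≠ 0 := by
    rintro rfl
    exact one_ne_zero (hf (by simpa using hshift 0 1 F.one_mem))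
  have hγ : f (x + γ) - f (y + γ) = c * (f x - f y) := by linear_combination hxy
  have hD : f x - f y ∈ F := by
    have hcD : (c - 1) * (f x - f y) ∈ F := by
      convert hderiv x y using 1
      rw [hγ]
      ring
    simpa [sub_ne_zero.mpr hc1] using F.mul_mem (F.inv_mem (F.sub_mem hc F.one_mem)) hcD
  obtain ⟨r, hr, hβr⟩ : ∃ r ∈ F, β * r = f x - f y :=
    ⟨_, F.div_mem hD hβ, mul_div_cancel₀ _ hβ0⟩
  obtain rfl : x = y + r := hf (by rw [hshift y r hr, hβr]; ring)
  have hγ' : f (y + r + γ) - f (y + γ) = f (y + r) - f y := by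
    rw [add_right_comm, hshift _ r hr, hshift y r hr]
    ring
  have hD0 : (c - 1) * (f (y + r) - f y) = 0 := by linear_combination hγ' - hγ
  exact hf (sub_eq_zero.mp ((mul_eq_zero.mp hD0).resolve_left (sub_ne_zero.mpr hc1)))

theorem injective_add_sub_mul_of_eq_add {f L G : K → K} {β c γ : K}
    (hfLG : ∀ x, f x = L x + G x) (hL_add : ∀ x y, L (x + y) = L x + L y)
    (hL : ∀ r ∈ F, L r = β * r) (hβ : β ∈ F) (hG : ∀ x, G x ∈ F)
    (hG_shift : ∀ x, ∀ r ∈ F, G (x + r) = G x)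
    (hf : Injective f) (hc : c ∈ F) (hc1 : c ≠ 1) :
    Injective fun x => f (x + γ) - c * f x := by
  refine injective_add_sub_mul_of_shift F hβ (fun x r hr => ?_) (fun x y => ?_) hf hc hc1
  · rw [hfLG, hfLG, hL_add, hL r hr, hG_shift x r hr]
    ring
  · convert F.sub_mem (F.sub_mem (hG (x + γ)) (hG (y + γ))) (F.sub_mem (hG x) (hG y)) using 1
    simp only [hfLG, hL_add]
    ring

end ShiftArgument

section Frobenius

variable (K : Type*) [Field K] (p : ℕ) [Fact p.Prime] [CharP K p] (m : ℕ)

def fixedFieldIterateFrobenius : Subfield K :=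
  (iterateFrobenius K p m).eqLocusField (RingHom.id K)

variable {K p m}

theorem mem_fixedFieldIterateFrobenius {x : K} :
    x ∈ fixedFieldIterateFrobenius K p m ↔ x ^ p ^ m = x :=
  Iff.rfl

theorem pow_pow_pow_eq_iterateFrobenius (x : K) (k : ℕ) :
    x ^ (p ^ m) ^ k = iterateFrobenius K p (m * k) x := by
  rw [iterateFrobenius_def, pow_mul]

theorem pow_pow_pow_of_mem_fixedFieldIterateFrobenius {r : K}
    (hr : r ∈ fixedFieldIterateFrobenius K p m) (k : ℕ) : r ^ (p ^ m) ^ k = r := by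
  induction k with
  | zero => simp
  | succ k ih => rw [pow_succ, pow_mul, ih, mem_fixedFieldIterateFrobenius.mp hr]

theorem sum_mul_add_pow_pow {n : ℕ} (a : Fin n → K) (x y : K) :
    ∑ i, a i * (x + y) ^ (p ^ m) ^ (i : ℕ) =
      ∑ i, a i * x ^ (p ^ m) ^ (i : ℕ) + ∑ i, a i * y ^ (p ^ m) ^ (i : ℕ) := by
  simp only [pow_pow_pow_eq_iterateFrobenius, map_add, mul_add, Finset.sum_add_distrib]

theorem sum_mul_pow_pow_of_mem_fixedFieldIterateFrobenius {n : ℕ} (a : Fin n → K) {r : K}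
    (hr : r ∈ fixedFieldIterateFrobenius K p m) :
    ∑ i, a i * r ^ (p ^ m) ^ (i : ℕ) = (∑ i, a i) * r := by
  simp only [pow_pow_pow_of_mem_fixedFieldIterateFrobenius hr, Finset.sum_mul]

theorem add_pow_sub_add_of_mem_fixedFieldIterateFrobenius (x : K) {r : K}
    (hr : r ∈ fixedFieldIterateFrobenius K p m) :
    (x + r) ^ p ^ m - (x + r) = x ^ p ^ m - x := by
  rw [← iterateFrobenius_def, map_add, iterateFrobenius_def, iterateFrobenius_def,
    mem_fixedFieldIterateFrobenius.mp hr]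
  ring

end Frobenius

theorem pow_pow_sub_one_div_sub_one_pow_eq {K : Type*} [Field K] [Fintype K] {q n : ℕ}
    (hK : Fintype.card K = q ^ n) (w : K) :
    (w ^ ((q ^ n - 1) / (q - 1))) ^ q = w ^ ((q ^ n - 1) / (q - 1)) := by
  set N := (q ^ n - 1) / (q - 1)
  have hq : q ≠ 0 := by
    rintro rfl
    have := Fintype.one_lt_card (α := K)
    rcases n with _ | _ <;> simp_all
  have hNq : N * q = (q ^ n - 1) + N := by
    have hNmul : N * (q - 1) = q ^ n - 1 :=
      Nat.div_mul_cancel (by simpa using Nat.sub_dvd_pow_sub_pow q 1 n)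
    rw [← hNmul, ← Nat.mul_add_one, Nat.sub_add_cancel (Nat.one_le_iff_ne_zero.mpr hq)]
  rw [← pow_mul]
  rcases eq_or_ne w 0 with rfl | hw
  · rcases eq_or_ne N 0 with hN | hN <;> simp [hN, hq]
  · rw [hNq, pow_add, ← hK, FiniteField.pow_card_sub_one_eq_one w hw, one_mul]

theorem stmt_6_general (p m n : ℕ) (hp : p.Prime)
    (q : ℕ) (hq : q = p ^ m)
    (K : Type*) [Field K] [Fintype K] (hK : Fintype.card K = q ^ n)
    (a : Fin n → K) (ha : ∀ i, a i ^ q = a i)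
    (g : K → K) (b : K) (hb : b ^ q = b)
    (f₂ : K → K)
    (hf₂ : ∀ x : K, f₂ x = b * (∑ i : Fin n, a i * x ^ q ^ (i : ℕ))
        + (g (x ^ q - x)) ^ ((q ^ n - 1) / (q - 1)))
    (hbij : Function.Bijective f₂)
    (c : K) (hc : c ^ q = c) (hc1 : c ≠ 1) (γ : K) :
    Function.Bijective (fun x : K => f₂ (x + γ) - c * f₂ x) := by
  subst hq
  have : Fact p.Prime := ⟨hp⟩
  have : CharP K p := charP_of_card_eq_prime_pow (hK.trans (pow_mul p m n).symm)
  set F := fixedFieldIterateFrobenius K p m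
  refine Finite.injective_iff_bijective.mp <|
    injective_add_sub_mul_of_eq_add F (β := b * ∑ i, a i) hf₂ (fun x y => ?_) (fun r hr => ?_)
      (F.mul_mem hb (F.sum_mem fun i _ => ha i)) (fun x => ?_)
      (fun x r hr => ?_) hbij.injective hc hc1
  · rw [sum_mul_add_pow_pow, mul_add]
  · rw [sum_mul_pow_pow_of_mem_fixedFieldIterateFrobenius a hr, mul_assoc]
  · exact pow_pow_sub_one_div_sub_one_pow_eq hK _
  · rw [add_pow_sub_add_of_mem_fixedFieldIterateFrobenius x hr]

/-- If `f₂(x) = b·φ(x) + g(x^q − x)^{(q^n−1)/(q−1)}` (with `φ` an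
`F_q`-linear polynomial with coefficients in `F_q` and `b ∈ F_q \ {0}`) is a bijection
of `K = F_{q^n}`, then `f₂` is PcN for every `c ∈ F_q`, `c ≠ 1`. -/
theorem stmt_6 (p m n : ℕ) (hp : p.Prime) (hm : 1 ≤ m) (hn : 1 ≤ n)
    (q : ℕ) (hq : q = p ^ m)
    (K : Type*) [Field K] [Fintype K] (hK : Fintype.card K = q ^ n)
    (a : Fin n → K) (ha : ∀ i, a i ^ q = a i)
    (g : K → K) (b : K) (hb : b ^ q = b) (hb0 : b ≠ 0)
    (f₂ : K → K)
    (hf₂ : ∀ x : K, f₂ x = b * (∑ i : Fin n, a i * x ^ q ^ (i : ℕ))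
        + (g (x ^ q - x)) ^ ((q ^ n - 1) / (q - 1)))
    (hbij : Function.Bijective f₂)
    (c : K) (hc : c ^ q = c) (hc1 : c ≠ 1) (γ : K) :
    Function.Bijective (fun x : K => f₂ (x + γ) - c * f₂ x) :=
  stmt_6_general p m n hp q hq K hK a ha g b hb f₂ hf₂ hbij c hc hc1 γ
end

section
/- Fix a prime p and m ≥ 1, set q = p^m, and let K be a finite field with q² elements. Let J = {x^q − x : x ∈ K}, let g : K → K be a function with g(J) ⊆ J, let φ(x) = a₀·x + a₁·x^q with a₀, a₁ ∈ F_q = {x ∈ K : x^q = x}, let s = p^h + p^k for some 1 ≤ h ≤ k ≤ 2m−1, and let b ∈ F_q, b ≠ 0. If f(x) = b·φ(x) + (g(x^q − x))^s is a bijection of K, then f is PcN with respect to every c ∈ F_q with c ≠ 1: for every such c and every γ ∈ K, the map x ↦ f(x+γ) − c·f(x) is a bijection of K. -/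
/-!
Write `σ x = x ^ q`, an involution of `K`, and `T x = σ x - x`. Since `g` maps `J = T(K)` into
`J` and `σ` negates `J`, the terms `g (T x) ^ s` are fixed by `σ` (as `(-1) ^ s = 1`), so
`T (f x) = b (a₀ - a₁) T x`, and `f x - f y = b (a₀ + a₁) (x - y)` whenever `T x = T y`.
Bijectivity of `f` forces both factors to be nonzero (for `a₀ - a₁`, because `T ≠ 0` on a
field with `q²` elements). If `f (x + γ) - c f x` takes the same value at `x₁` and `x₂`,
applying `T` (which commutes with multiplication by `c ∈ F_q`) gives
`(1 - c) T x₁ = (1 - c) T x₂`, and then the second identity gives `(1 - c) (x₁ - x₂) = 0`.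
-/

open Function Polynomial

section Involution

variable {R : Type*} [CommRing R] {σ : R →+* R}

theorem RingHom.map_sub_self_of_involutive (hσ : Involutive σ) (x : R) :
    σ (σ x - x) = -(σ x - x) := by
  rw [map_sub, hσ x, neg_sub]

theorem RingHom.map_pow_eq_self_of_map_eq_neg {w : R} (hw : σ w = -w) {s : ℕ}
    (hs : (-1 : R) ^ s = 1) : σ (w ^ s) = w ^ s := by
  rw [map_pow, hw, neg_pow, hs, one_mul]

end Involution

theorem neg_one_pow_expChar_pow_add {R : Type*} [Ring R] (p : ℕ) [ExpChar R p] (h k : ℕ) :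
    (-1 : R) ^ (p ^ h + p ^ k) = 1 := by
  rw [pow_add, neg_one_pow_expChar_pow, neg_one_pow_expChar_pow, neg_mul_neg, one_mul]

section Twisted

variable {R : Type*} [CommRing R] (σ : R →+* R) {f : R → R} {α β : R}

theorem sub_eq_mul_sub_of_eq_add_comp {G : R → R} {a₀ a₁ b : R}
    (hf : ∀ x, f x = b * (a₀ * x + a₁ * σ x) + G (σ x - x)) {x y : R}
    (hxy : σ x - x = σ y - y) : f x - f y = b * (a₀ + a₁) * (x - y) := by
  rw [hf, hf, hxy]
  linear_combination b * a₁ * hxy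

theorem map_sub_self_eq_of_eq_add_comp {G : R → R} {a₀ a₁ b : R} (hσ : Involutive σ)
    (hG : ∀ x, σ (G (σ x - x)) = G (σ x - x)) (ha₀ : σ a₀ = a₀) (ha₁ : σ a₁ = a₁) (hb : σ b = b)
    (hf : ∀ x, f x = b * (a₀ * x + a₁ * σ x) + G (σ x - x)) (x : R) :
    σ (f x) - f x = b * (a₀ - a₁) * (σ x - x) := by
  rw [hf, map_add, hG, map_mul, map_add, map_mul, map_mul, hσ x, hb, ha₀, ha₁]
  ring

theorem ne_zero_of_injective_of_sub_eq_mul_sub [Nontrivial R]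
    (hα : ∀ x y, σ x - x = σ y - y → f x - f y = α * (x - y)) (hf : Injective f) : α ≠ 0 := by
  intro h0
  have h10 : f 1 = f 0 := sub_eq_zero.mp (by simpa [h0] using hα 1 0)
  exact one_ne_zero (hf h10)

theorem ne_zero_of_surjective_of_map_sub_self_eq
    (hβ : ∀ x, σ (f x) - f x = β * (σ x - x)) (hf : Surjective f) (hσ : ∃ x, σ x ≠ x) :
    β ≠ 0 := by
  rintro rfl
  obtain ⟨y, hy⟩ := hσ
  obtain ⟨x, rfl⟩ := hf y
  exact hy (sub_eq_zero.mp (by simpa using hβ x))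

theorem injective_add_sub_mul_of_map_sub_self_eq [IsDomain R]
    (hβ : ∀ x, σ (f x) - f x = β * (σ x - x)) (hβ0 : β ≠ 0)
    (hα : ∀ x y, σ x - x = σ y - y → f x - f y = α * (x - y)) (hα0 : α ≠ 0)
    {c : R} (hc : σ c = c) (hc1 : c ≠ 1) (γ : R) :
    Injective fun x => f (x + γ) - c * f x := by
  intro x₁ x₂ (hD : f (x₁ + γ) - c * f x₁ = f (x₂ + γ) - c * f x₂)
  have h1c : 1 - c ≠ 0 := sub_ne_zero.mpr (Ne.symm hc1)
  have hTD : ∀ x, σ (f (x + γ) - c * f x) - (f (x + γ) - c * f x)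
      = β * ((1 - c) * (σ x - x) + (σ γ - γ)) := fun x => by
    have h₁ := hβ (x + γ)
    have h₂ := hβ x
    rw [map_add] at h₁
    rw [map_sub, map_mul, hc]
    linear_combination h₁ - c * h₂
  have hT : σ x₁ - x₁ = σ x₂ - x₂ := by
    have := hTD x₁
    rw [hD, hTD x₂] at this
    exact mul_left_cancel₀ h1c (add_right_cancel (mul_left_cancel₀ hβ0 this)).symm
  have hTγ : σ (x₁ + γ) - (x₁ + γ) = σ (x₂ + γ) - (x₂ + γ) := by
    rw [map_add, map_add]; linear_combination hT
  have hzero : α * (1 - c) * (x₁ - x₂) = 0 := by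
    linear_combination hD - hα _ _ hTγ + c * hα _ _ hT
  simpa [hα0, h1c, sub_eq_zero] using hzero

end Twisted

section FiniteField

variable {K : Type*} [Field K] [Fintype K]

theorem iterateFrobenius_involutive_of_card_eq_sq {p m : ℕ} [ExpChar K p]
    (hK : Fintype.card K = (p ^ m) ^ 2) : Involutive (iterateFrobenius K p m) := fun x => by
  rw [iterateFrobenius_def, iterateFrobenius_def, ← pow_mul, ← sq, ← hK, FiniteField.pow_card]

theorem exists_pow_ne_self {q : ℕ} (hq : 1 < q) (hK : q < Fintype.card K) :
    ∃ x : K, x ^ q ≠ x := by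
  by_contra! hall
  have hroots : (Finset.univ : Finset K).val ⊆ (X ^ q - X : K[X]).roots := fun x _ => by
    rw [mem_roots (FiniteField.X_pow_card_sub_X_ne_zero K hq)]
    simp [hall x]
  have := card_le_degree_of_subset_roots hroots
  rw [FiniteField.X_pow_card_sub_X_natDegree_eq K hq, Finset.card_univ] at this
  omega

end FiniteField

theorem stmt_9_general (p m : ℕ) (hp : p.Prime) (hm : 1 ≤ m) (q : ℕ) (hq : q = p ^ m)
    (K : Type*) [Field K] [Fintype K] (hK : Fintype.card K = q ^ 2)
    (J : Set K) (hJ : J = {y : K | ∃ x : K, y = x ^ q - x})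
    (g : K → K) (hg : ∀ y ∈ J, g y ∈ J)
    (a₀ a₁ : K) (ha₀ : a₀ ^ q = a₀) (ha₁ : a₁ ^ q = a₁)
    (h k : ℕ)
    (s : ℕ) (hs : s = p ^ h + p ^ k)
    (b : K) (hb : b ^ q = b)
    (f : K → K)
    (hf : ∀ x : K, f x = b * (a₀ * x + a₁ * x ^ q) + (g (x ^ q - x)) ^ s)
    (hbij : Function.Bijective f)
    (c : K) (hc : c ^ q = c) (hc1 : c ≠ 1) (γ : K) :
    Function.Bijective (fun x : K => f (x + γ) - c * f x) := by
  subst hq hJ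
  have : Fact p.Prime := ⟨hp⟩
  have : CharP K p := charP_of_card_eq_prime_pow (hK.trans (pow_mul p m 2).symm)
  set σ := iterateFrobenius K p m
  have hσ : Involutive σ := iterateFrobenius_involutive_of_card_eq_sq hK
  have hG : ∀ x, σ (g (σ x - x) ^ s) = g (σ x - x) ^ s := fun x => by
    obtain ⟨z, hz⟩ : ∃ z, g (σ x - x) = σ z - z := hg _ ⟨x, rfl⟩
    rw [hz]
    exact RingHom.map_pow_eq_self_of_map_eq_neg (RingHom.map_sub_self_of_involutive hσ z)
      (hs ▸ neg_one_pow_expChar_pow_add p h k)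
  have hf' : ∀ x, f x = b * (a₀ * x + a₁ * σ x) + g (σ x - x) ^ s := hf
  have hα : ∀ x y, σ x - x = σ y - y → f x - f y = b * (a₀ + a₁) * (x - y) := fun _ _ =>
    sub_eq_mul_sub_of_eq_add_comp σ (G := (· ^ s) ∘ g) hf'
  have hβ := map_sub_self_eq_of_eq_add_comp σ (G := (· ^ s) ∘ g) hσ hG ha₀ ha₁ hb hf'
  have hq1 : 1 < p ^ m := Nat.one_lt_pow (by omega) hp.one_lt
  have hσne : ∃ x, σ x ≠ x := exists_pow_ne_self hq1 (by rw [hK]; nlinarith)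
  exact Finite.injective_iff_bijective.mp <| injective_add_sub_mul_of_map_sub_self_eq σ hβ
    (ne_zero_of_surjective_of_map_sub_self_eq σ hβ hbij.2 hσne) hα
    (ne_zero_of_injective_of_sub_eq_mul_sub σ hα hbij.1) hc hc1 γ

/-- If `f(x) = b·φ(x) + g(x^q − x)^s` as in Statement 7 is a bijection of
`K = F_{q²}`, then `f` is PcN for every `c ∈ F_q` with `c ≠ 1`. -/
theorem stmt_9 (p m : ℕ) (hp : p.Prime) (hm : 1 ≤ m) (q : ℕ) (hq : q = p ^ m)
    (K : Type*) [Field K] [Fintype K] (hK : Fintype.card K = q ^ 2)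
    (J : Set K) (hJ : J = {y : K | ∃ x : K, y = x ^ q - x})
    (g : K → K) (hg : ∀ y ∈ J, g y ∈ J)
    (a₀ a₁ : K) (ha₀ : a₀ ^ q = a₀) (ha₁ : a₁ ^ q = a₁)
    (h k : ℕ) (hh : 1 ≤ h) (hhk : h ≤ k) (hk : k ≤ 2 * m - 1)
    (s : ℕ) (hs : s = p ^ h + p ^ k)
    (b : K) (hb : b ^ q = b) (hb0 : b ≠ 0)
    (f : K → K)
    (hf : ∀ x : K, f x = b * (a₀ * x + a₁ * x ^ q) + (g (x ^ q - x)) ^ s)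
    (hbij : Function.Bijective f)
    (c : K) (hc : c ^ q = c) (hc1 : c ≠ 1) (γ : K) :
    Function.Bijective (fun x : K => f (x + γ) - c * f x) :=
  stmt_9_general p m hp hm q hq K hK J hJ g hg a₀ a₁ ha₀ ha₁ h k s hs b hb f hf hbij c hc hc1 γ
end

section
/- Let m ≥ 1 and let n be an odd positive integer; set q = 2^m and let K be a finite field with q^n elements (characteristic 2). Let φ(x) = Σ_{i=0}^{n−1} a_i·x^{q^i} with all a_i ∈ F_q = {x ∈ K : x^q = x}. Assume that the restriction of φ to F_q is 2-to-1 (every element of F_q has exactly 0 or 2 preimages in F_q under φ) and that φ restricted to J = {x^q + x : x ∈ K} is a bijection of J. Let g : K → K be any function and b ∈ F_q, b ≠ 0, and define f₁(x) = b·φ(x) + Tr(g(x^q + x)) and f₂(x) = b·φ(x) + (g(x^q + x))^{(q^n−1)/(q−1)}, where Tr(y) = Σ_{i=0}^{n−1} y^{q^i}. Then for every c ∈ F_q with c ≠ 1, both f₁ and f₂ are APcN with respect to c: for all a, β ∈ K, each of the equations f₁(x+a) + c·f₁(x) = β and f₂(x+a) + c·f₂(x) = β has at most two solutions x ∈ K.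 -/
/-!
Write `σ x = x ^ q` and `ψ x = x ^ q + x`. Both `Tr` and `y ↦ y ^ ((q ^ n - 1) / (q - 1))` take
values in `F_q`, so each `fᵢ` has the shape `b • φ + H ∘ ψ` with `H` valued in `F_q`. If `x`
and `x₀` solve `f (x + a) + c f x = β`, then `d = x + x₀` satisfies `b (1 + c) φ d = u` with
`u ∈ F_q`. Hence `φ d ∈ F_q`, so `φ (ψ d) = ψ (φ d) = 0`, and injectivity of `φ` on `J` gives
`d ∈ F_q`. But then `ψ (y + d) = ψ y`, the `H`-terms cancel, `u = 0` and `φ d = 0`: all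
solutions lie in `x₀ + (ker φ ∩ F_q)`, a set with two elements by the 2-to-1 hypothesis.
-/

open Finset

section Frobenius

variable {R ι : Type*} [CommRing R] {p : ℕ} [ExpChar R p] (m : ℕ)

theorem sum_mul_add_pow_pow_pow [Fintype ι] (co : ι → R) (k : ι → ℕ) (x y : R) :
    ∑ i, co i * (x + y) ^ (p ^ m) ^ k i =
      ∑ i, co i * x ^ (p ^ m) ^ k i + ∑ i, co i * y ^ (p ^ m) ^ k i := by
  rw [← sum_add_distrib]
  refine sum_congr rfl fun i _ ↦ ?_
  rw [← mul_add, ← pow_mul, add_pow_expChar_pow]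

theorem sum_mul_pow_pow_pow_comm [Fintype ι] {co : ι → R} (hco : ∀ i, co i ^ p ^ m = co i)
    (k : ι → ℕ) (x : R) :
    ∑ i, co i * (x ^ p ^ m) ^ (p ^ m) ^ k i = (∑ i, co i * x ^ (p ^ m) ^ k i) ^ p ^ m := by
  rw [sum_pow_char_pow]
  refine sum_congr rfl fun i _ ↦ ?_
  rw [mul_pow, hco, ← pow_mul, ← pow_mul, ← pow_mul, mul_comm (p ^ m)]

theorem sum_pow_pow_pow_pow_eq_self {n : ℕ} {y : R} (hy : y ^ (p ^ m) ^ n = y) :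
    (∑ i : Fin n, y ^ (p ^ m) ^ (i : ℕ)) ^ p ^ m = ∑ i : Fin n, y ^ (p ^ m) ^ (i : ℕ) := by
  rw [sum_pow_char_pow, Fin.sum_univ_eq_sum_range (fun i ↦ (y ^ (p ^ m) ^ i) ^ p ^ m),
    Fin.sum_univ_eq_sum_range (fun i ↦ y ^ (p ^ m) ^ i)]
  simp only [← pow_mul y, ← pow_succ]
  have h := sum_range_succ' (fun i ↦ y ^ (p ^ m) ^ i) n
  rw [sum_range_succ, hy, pow_zero, pow_one] at h
  exact add_right_cancel h.symm

end Frobenius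

theorem FiniteField.pow_pow_eq_self_of_mul_sub_one_eq {K : Type*} [Field K] [Fintype K]
    {q e : ℕ} (hq : q ≠ 0) (he : e * (q - 1) = Fintype.card K - 1) (y : K) :
    (y ^ e) ^ q = y ^ e := by
  rcases eq_or_ne y 0 with rfl | hy
  · rcases eq_or_ne e 0 with rfl | he0 <;> simp [*]
  obtain ⟨r, rfl⟩ := Nat.exists_eq_succ_of_ne_zero hq
  rw [← pow_mul, Nat.mul_succ, pow_add, ← Nat.succ_sub_one r, he,
    FiniteField.pow_card_sub_one_eq_one y hy, one_mul]

section APcN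

variable {K : Type*} [Field K] [CharP K 2] {σ : K →+* K} {φ : K →+ K}

theorem apply_eq_self_of_map_apply_eq_self (hφσ : ∀ x, φ (σ x) = σ (φ x))
    (hφψ : ∀ z, φ (σ z + z) = 0 → σ z + z = 0) {d : K} (hd : σ (φ d) = φ d) : σ d = d :=
  CharTwo.add_eq_zero.mp <| hφψ d <| by rw [map_add, hφσ, hd, CharTwo.add_self_eq_zero]

variable {H : K → K} {b c : K}

theorem add_apply_eq_self_and_map_eq_zero (hφσ : ∀ x, φ (σ x) = σ (φ x))
    (hφψ : ∀ z, φ (σ z + z) = 0 → σ z + z = 0) (hH : ∀ y, σ (H y) = H y)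
    (hb : σ b = b) (hb0 : b ≠ 0) (hc : σ c = c) (hc1 : c ≠ 1)
    {f : K → K} (hf : ∀ x, f x = b * φ x + H (σ x + x)) {a x x₀ : K}
    (heq : f (x + a) + c * f x = f (x₀ + a) + c * f x₀) :
    σ (x + x₀) = x + x₀ ∧ φ (x + x₀) = 0 := by
  set d := x + x₀
  set u := H (σ (x + a) + (x + a)) + H (σ (x₀ + a) + (x₀ + a)) +
    c * (H (σ x + x) + H (σ x₀ + x₀))
  have hv : b * (1 + c) ≠ 0 :=
    mul_ne_zero hb0 fun h ↦ hc1 (CharTwo.add_eq_zero.mp h).symm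
  have hlin : b * (1 + c) * φ d = u := by
    simp only [hf, map_add] at heq
    simp only [d, map_add]
    grind
  have hφd : σ (φ d) = φ d := by
    have hu : σ u = u := by simp only [u, map_add, map_mul, hH, hc]
    have : φ d = u / (b * (1 + c)) := eq_div_of_mul_eq hv (by rw [mul_comm, hlin])
    rw [this, map_div₀, hu, map_mul, map_add, map_one, hb, hc]
  have hd : σ d = d := apply_eq_self_of_map_apply_eq_self hφσ hφψ hφd
  have hψ : ∀ y, σ (y + d) + (y + d) = σ y + y := fun y ↦ by
    rw [map_add, hd]; grind
  have hx₀ : x₀ = x + d := by grind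
  have hu : u = 0 := by
    simp only [u, hx₀, add_right_comm x d a, hψ]
    grind
  exact ⟨hd, (mul_eq_zero.mp (hlin.trans hu)).resolve_left hv⟩

theorem ncard_setOf_add_mul_eq_le [Finite K] (hφσ : ∀ x, φ (σ x) = σ (φ x))
    (hφψ : ∀ z, φ (σ z + z) = 0 → σ z + z = 0) (hH : ∀ y, σ (H y) = H y)
    (hb : σ b = b) (hb0 : b ≠ 0) (hc : σ c = c) (hc1 : c ≠ 1)
    {f : K → K} (hf : ∀ x, f x = b * φ x + H (σ x + x)) (a β : K) :
    {x | f (x + a) + c * f x = β}.ncard ≤ {z | σ z = z ∧ φ z = 0}.ncard := by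
  rcases Set.eq_empty_or_nonempty {x | f (x + a) + c * f x = β} with he | ⟨x₀, hx₀⟩
  · simp [he]
  calc {x | f (x + a) + c * f x = β}.ncard
      = ((· + x₀) '' {x | f (x + a) + c * f x = β}).ncard :=
        (Set.ncard_image_of_injective _ (add_left_injective x₀)).symm
    _ ≤ _ := Set.ncard_le_ncard (t := {z | σ z = z ∧ φ z = 0})
        (Set.image_subset_iff.mpr fun x hx ↦ add_apply_eq_self_and_map_eq_zero hφσ hφψ hH
          hb hb0 hc hc1 hf ((hx : _ = β).trans hx₀.symm)) (Set.toFinite _)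

end APcN

theorem stmt_10_general (m n : ℕ)
    (q : ℕ) (hq : q = 2 ^ m)
    (K : Type*) [Field K] [Fintype K] (hK : Fintype.card K = q ^ n)
    (co : Fin n → K) (hco : ∀ i, co i ^ q = co i)
    (φ : K → K) (hφ : ∀ x : K, φ x = ∑ i : Fin n, co i * x ^ q ^ (i : ℕ))
    (h2to1 : ∀ y : K, y ^ q = y →
      {x : K | x ^ q = x ∧ φ x = y}.ncard = 0 ∨ {x : K | x ^ q = x ∧ φ x = y}.ncard = 2)
    (J : Set K) (hJ : J = {y : K | ∃ x : K, y = x ^ q + x})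
    (hφJ : Set.BijOn φ J J)
    (g : K → K) (b : K) (hb : b ^ q = b) (hb0 : b ≠ 0)
    (f₁ f₂ : K → K)
    (hf₁ : ∀ x : K, f₁ x = b * φ x + ∑ i : Fin n, (g (x ^ q + x)) ^ q ^ (i : ℕ))
    (hf₂ : ∀ x : K, f₂ x = b * φ x + (g (x ^ q + x)) ^ ((q ^ n - 1) / (q - 1)))
    (c : K) (hc : c ^ q = c) (hc1 : c ≠ 1) :
    (∀ a β : K, {x : K | f₁ (x + a) + c * f₁ x = β}.ncard ≤ 2) ∧
    (∀ a β : K, {x : K | f₂ (x + a) + c * f₂ x = β}.ncard ≤ 2) := by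
  subst hq hJ
  have : CharP K 2 := charP_of_card_eq_prime_pow (f := m * n) (by rw [hK, pow_mul])
  let σ := iterateFrobenius K 2 m
  let Φ : K →+ K := AddMonoidHom.mk' φ fun x y ↦ by simp only [hφ, sum_mul_add_pow_pow_pow]
  have hΦσ : ∀ x, Φ (σ x) = σ (Φ x) := fun x ↦ by
    simp only [Φ, σ, AddMonoidHom.mk'_apply, iterateFrobenius_def, hφ,
      sum_mul_pow_pow_pow_comm m hco]
  have hΦψ : ∀ z, Φ (σ z + z) = 0 → σ z + z = 0 := fun z hz ↦
    hφJ.injOn ⟨z, rfl⟩ ⟨0, by simp⟩ (hz.trans (map_zero Φ).symm)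
  have hker : {z | σ z = z ∧ Φ z = 0}.ncard ≤ 2 :=
    ((h2to1 0 (zero_pow (by positivity))).resolve_left
      (Set.ncard_ne_zero_of_mem ⟨zero_pow (by positivity), map_zero Φ⟩)).le
  have hfix : ∀ y : K, y ^ (2 ^ m) ^ n = y := fun y ↦ hK ▸ FiniteField.pow_card y
  have hnorm : ((2 ^ m) ^ n - 1) / (2 ^ m - 1) * (2 ^ m - 1) = Fintype.card K - 1 := by
    rw [hK]; exact Nat.div_mul_cancel (by simpa using Nat.sub_dvd_pow_sub_pow (2 ^ m) 1 n)
  refine ⟨fun a β ↦ le_trans ?_ hker, fun a β ↦ le_trans ?_ hker⟩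
  · exact ncard_setOf_add_mul_eq_le hΦσ hΦψ
      (fun y ↦ sum_pow_pow_pow_pow_eq_self m (hfix (g y))) hb hb0 hc hc1 hf₁ a β
  · exact ncard_setOf_add_mul_eq_le hΦσ hΦψ
      (fun y ↦ FiniteField.pow_pow_eq_self_of_mul_sub_one_eq (by positivity) hnorm (g y))
      hb hb0 hc hc1 hf₂ a β

/-- Theorem 8 / AGW-type APcN maps in characteristic 2: with `q = 2^m`,
`n` odd, `K = F_{q^n}`, `φ` an `F_q`-linear polynomial with coefficients in `F_q` that
is 2-to-1 on `F_q` and permutes `J = {x^q + x}`, and `b ∈ F_q \ {0}`, both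
`f₁(x) = b·φ(x) + Tr(g(x^q + x))` and `f₂(x) = b·φ(x) + g(x^q + x)^{(q^n−1)/(q−1)}`
are APcN for every `c ∈ F_q`, `c ≠ 1`. -/
theorem stmt_10 (m n : ℕ) (hm : 1 ≤ m) (hn1 : 1 ≤ n) (hnodd : Odd n)
    (q : ℕ) (hq : q = 2 ^ m)
    (K : Type*) [Field K] [Fintype K] (hK : Fintype.card K = q ^ n)
    (co : Fin n → K) (hco : ∀ i, co i ^ q = co i)
    (φ : K → K) (hφ : ∀ x : K, φ x = ∑ i : Fin n, co i * x ^ q ^ (i : ℕ))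
    (h2to1 : ∀ y : K, y ^ q = y →
      {x : K | x ^ q = x ∧ φ x = y}.ncard = 0 ∨ {x : K | x ^ q = x ∧ φ x = y}.ncard = 2)
    (J : Set K) (hJ : J = {y : K | ∃ x : K, y = x ^ q + x})
    (hφJ : Set.BijOn φ J J)
    (g : K → K) (b : K) (hb : b ^ q = b) (hb0 : b ≠ 0)
    (f₁ f₂ : K → K)
    (hf₁ : ∀ x : K, f₁ x = b * φ x + ∑ i : Fin n, (g (x ^ q + x)) ^ q ^ (i : ℕ))
    (hf₂ : ∀ x : K, f₂ x = b * φ x + (g (x ^ q + x)) ^ ((q ^ n - 1) / (q - 1)))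
    (c : K) (hc : c ^ q = c) (hc1 : c ≠ 1) :
    (∀ a β : K, {x : K | f₁ (x + a) + c * f₁ x = β}.ncard ≤ 2) ∧
    (∀ a β : K, {x : K | f₂ (x + a) + c * f₂ x = β}.ncard ≤ 2) :=
  stmt_10_general m n q hq K hK co hco φ hφ h2to1 J hJ hφJ g b hb hb0 f₁ f₂ hf₁ hf₂ c hc hc1
end

section
/- Let K be a finite field with q elements, let c ∈ K with c ≠ 1, and let d ≥ 1 be an integer. If the power map f(x) = x^d is APcN with respect to c over K (i.e., for all a, b ∈ K with (a,c) ≠ (0,1), the equation (x+a)^d − c·x^d = b has at most two solutions x ∈ K), then gcd(d, q−1) ≤ 2. -/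
/-!
For `a = 0` and `b = 1 - c` the equation `(x + a)^d - c x^d = b` reads `(1 - c)(x^d - 1) = 0`,
so for `c ≠ 1` its solutions are the `d`-th roots of unity in `K`. Since `Kˣ` is cyclic of
order `q - 1`, there are at least `gcd(d, q - 1)` of them.
-/

theorem FiniteField.gcd_card_sub_one_le_ncard_pow_eq_one (K : Type*) [Field K] [Finite K]
    (d : ℕ) : (Nat.card K - 1).gcd d ≤ {x : K | x ^ d = 1}.ncard := by
  rw [← Nat.card_units, ← IsCyclic.card_powMonoidHom_ker, ← Nat.card_coe_set_eq]
  refine Nat.card_le_card_of_injective (fun u => ⟨(u : Kˣ), ?_⟩) fun u v huv => ?_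
  · simpa [← Units.val_pow_eq_pow_val] using congrArg Units.val (MonoidHom.mem_ker.mp u.2)
  · exact Subtype.ext (Units.ext (congrArg Subtype.val huv))

theorem sub_mul_self_eq_one_sub_iff {K : Type*} [Field K] {c : K} (hc : c ≠ 1) (y : K) :
    y - c * y = 1 - c ↔ y = 1 := by
  rw [← one_sub_mul, mul_eq_left₀ (sub_ne_zero.mpr hc.symm)]

theorem stmt_12_general (K : Type*) [Field K] [Fintype K] (q : ℕ) (hq : Fintype.card K = q)
    (c : K) (hc : c ≠ 1) (d : ℕ)
    (hAPcN : ∀ a b : K, ¬(a = 0 ∧ c = 1) →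
      {x : K | (x + a) ^ d - c * x ^ d = b}.ncard ≤ 2) :
    Nat.gcd d (q - 1) ≤ 2 := by
  have hroots := hAPcN 0 (1 - c) (by simp [hc])
  simp only [add_zero, sub_mul_self_eq_one_sub_iff hc] at hroots
  rw [← hq, Fintype.card_eq_nat_card, Nat.gcd_comm]
  exact (FiniteField.gcd_card_sub_one_le_ncard_pow_eq_one K d).trans hroots

/-- if the power map `x ↦ x^d` over a finite field with `q` elements is
APcN with respect to some `c ≠ 1`, then `gcd(d, q − 1) ≤ 2`. -/
theorem stmt_12 (K : Type*) [Field K] [Fintype K] (q : ℕ) (hq : Fintype.card K = q)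
    (c : K) (hc : c ≠ 1) (d : ℕ) (hd : 1 ≤ d)
    (hAPcN : ∀ a b : K, ¬(a = 0 ∧ c = 1) →
      {x : K | (x + a) ^ d - c * x ^ d = b}.ncard ≤ 2) :
    Nat.gcd d (q - 1) ≤ 2 :=
  stmt_12_general K q hq c hc d hAPcN
end

section
/- Let p be a prime and d ≥ 2 an integer with p ∤ d(d−1); let s be the least positive integer such that (d−1) | (p^s − 1). Let F be an algebraic closure of F_p and let c ∈ F be such that every c₀ ∈ F with c₀^{d−1} = c satisfies c₀^{p^s} ≠ c₀. Let D_c(X,Y) = (X+1)^d − (Y+1)^d − c·(X^d − Y^d) ∈ F[X,Y]. Then D_c has no singular points off the line X = Y: there is no pair (x₀, y₀) ∈ F² with x₀ ≠ y₀ such that D_c(x₀,y₀) = 0 and both partial derivatives of D_c vanish at (x₀,y₀) (equivalently, since p ∤ d, such that D_c(x₀,y₀) = 0, (x₀+1)^{d−1} = c·x₀^{d−1}, and (y₀+1)^{d−1} = c·y₀^{d−1}). -/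
/-!
At a singular point `(x, y)` the partial derivatives give `(x+1)^(d-1) = c x^(d-1)` and
`(y+1)^(d-1) = c y^(d-1)`, and then `D_c(x, y) = c (x^(d-1) - y^(d-1))`, so `x^(d-1) = y^(d-1)`
and `(x+1)^(d-1) = (y+1)^(d-1)`. Hence `x / y` and `(x+1) / (y+1)` are `(d-1)`-th roots of unity,
which lie in `𝔽_{p^s}` because `(d-1) ∣ p^s - 1`. Knowing both ratios determines `y` (as `x ≠ y`)
by a linear equation over `𝔽_{p^s}`, so `x ∈ 𝔽_{p^s}` and `(x+1)/x` is a `(d-1)`-th root of `c`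
in `𝔽_{p^s}`.
-/

open MvPolynomial

-- For `F` an algebraic closure of `𝔽_p` this is `𝔽_{p^s}`.
def frobeniusFixedField (F : Type*) [Field F] (p s : ℕ) [ExpChar F p] : Subfield F :=
  (iterateFrobenius F p s).eqLocusField (RingHom.id F)

theorem mem_frobeniusFixedField {F : Type*} [Field F] {p s : ℕ} [ExpChar F p] {x : F} :
    x ∈ frobeniusFixedField F p s ↔ x ^ p ^ s = x := by
  rw [frobeniusFixedField, RingHom.mem_eqLocusField, iterateFrobenius_def, RingHom.id_apply]

theorem pow_eq_self_of_pow_eq_one {M : Type*} [Monoid M] {ζ : M} {m n : ℕ} (hζ : ζ ^ m = 1)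
    (hmn : m ∣ n - 1) (hn : n ≠ 0) : ζ ^ n = ζ := by
  obtain ⟨k, hk⟩ := hmn
  rw [← Nat.sub_add_cancel (Nat.one_le_iff_ne_zero.2 hn), pow_succ, hk, pow_mul, hζ, one_pow,
    one_mul]

theorem div_mem_frobeniusFixedField_of_pow_eq {F : Type*} [Field F] {p s m : ℕ} [ExpChar F p]
    (hm : m ∣ p ^ s - 1) {u v : F} (huv : u ^ m = v ^ m) : u / v ∈ frobeniusFixedField F p s := by
  rw [mem_frobeniusFixedField]
  rcases eq_or_ne v 0 with rfl | hv
  · rw [div_zero, zero_pow (expChar_pow_pos F p s).ne']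
  · refine pow_eq_self_of_pow_eq_one ?_ hm (expChar_pow_pos F p s).ne'
    rw [div_pow, huv, div_self (pow_ne_zero m hv)]

theorem Subfield.mem_of_eq_mul_of_add_one_eq_mul {K : Type*} [Field K] {S : Subfield K}
    {t u x y : K} (ht : t ∈ S) (hu : u ∈ S) (hx : x = t * y) (hx1 : x + 1 = u * (y + 1))
    (hxy : x ≠ y) : x ∈ S := by
  have htu : t - u ≠ 0 := by
    rintro h
    obtain rfl : t = u := sub_eq_zero.1 h
    exact hxy (by linear_combination hx - y * (hx1 - hx))
  have hy : y = (u - 1) / (t - u) := by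
    field_simp
    linear_combination hx1 - hx
  rw [hx, hy]
  exact S.mul_mem ht (S.div_mem (S.sub_mem hu S.one_mem) (S.sub_mem ht hu))

noncomputable def curveD {K : Type*} [Field K] (c : K) (d : ℕ) : MvPolynomial (Fin 2) K :=
  (X 0 + 1) ^ d - (X 1 + 1) ^ d - C c * ((X 0) ^ d - (X 1) ^ d)

section curveD

variable {K : Type*} [Field K] {c x y : K} {m : ℕ}

theorem eval_curveD (d : ℕ) :
    eval ![x, y] (curveD c d) = (x + 1) ^ d - (y + 1) ^ d - c * (x ^ d - y ^ d) := by
  simp [curveD]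

theorem eval_pderiv_zero_curveD :
    eval ![x, y] (pderiv 0 (curveD c (m + 1))) = (m + 1) * ((x + 1) ^ m - c * x ^ m) := by
  simp [curveD]
  ring

theorem eval_pderiv_one_curveD :
    eval ![x, y] (pderiv 1 (curveD c (m + 1))) = -((m + 1) * ((y + 1) ^ m - c * y ^ m)) := by
  simp [curveD]
  ring

theorem curveD_singular_point (hm : (m + 1 : K) ≠ 0) (hc : c ≠ 0)
    (h : eval ![x, y] (curveD c (m + 1)) = 0) (hX : eval ![x, y] (pderiv 0 (curveD c (m + 1))) = 0)
    (hY : eval ![x, y] (pderiv 1 (curveD c (m + 1))) = 0) :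
    (x + 1) ^ m = c * x ^ m ∧ (y + 1) ^ m = c * y ^ m ∧ x ^ m = y ^ m := by
  rw [eval_pderiv_zero_curveD, mul_eq_zero, or_iff_right hm, sub_eq_zero] at hX
  rw [eval_pderiv_one_curveD, neg_eq_zero, mul_eq_zero, or_iff_right hm, sub_eq_zero] at hY
  rw [eval_curveD] at h
  refine ⟨hX, hY, sub_eq_zero.1 ((mul_eq_zero.1 ?_).resolve_left hc)⟩
  linear_combination h - (x + 1) * hX + (y + 1) * hY

theorem ne_zero_of_add_one_pow_eq (hm : m ≠ 0) (hc : c ≠ 0) (h : (x + 1) ^ m = c * x ^ m) :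
    x ≠ 0 ∧ x + 1 ≠ 0 := by
  constructor
  · rintro rfl
    simp [zero_pow hm] at h
  · intro hx
    rw [hx, zero_pow hm, eq_comm, mul_eq_zero, or_iff_right hc, pow_eq_zero_iff hm] at h
    simp [h] at hx

end curveD

theorem stmt_13_general (p : ℕ) [Fact p.Prime] (d : ℕ) (hd : 2 ≤ d) (hpd : ¬ p ∣ d * (d - 1))
    (s : ℕ) (hs : IsLeast {s' : ℕ | 0 < s' ∧ (d - 1) ∣ (p ^ s' - 1)} s)
    (F : Type*) [Field F] [Algebra (ZMod p) F]
    (c : F) (hc : ∀ c₀ : F, c₀ ^ (d - 1) = c → c₀ ^ p ^ s ≠ c₀)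
    (D : MvPolynomial (Fin 2) F)
    (hD : D = (X 0 + 1) ^ d - (X 1 + 1) ^ d - C c * ((X 0) ^ d - (X 1) ^ d)) :
    ¬ ∃ x y : F, x ≠ y ∧ eval ![x, y] D = 0 ∧
      eval ![x, y] (pderiv 0 D) = 0 ∧ eval ![x, y] (pderiv 1 D) = 0 := by
  have : CharP F p := charP_of_injective_algebraMap (algebraMap (ZMod p) F).injective p
  obtain ⟨m, rfl⟩ : ∃ m, d = m + 1 := ⟨d - 1, by omega⟩
  have hm : m ≠ 0 := by omega
  rw [Nat.add_sub_cancel] at hpd hs hc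
  rw [show D = curveD c (m + 1) from hD]
  rintro ⟨x, y, hxy, h, hX, hY⟩
  have hc0 : c ≠ 0 := by
    rintro rfl
    exact hc 0 (zero_pow hm) (zero_pow (expChar_pow_pos F p s).ne')
  have hm1 : (m + 1 : F) ≠ 0 := by
    exact_mod_cast (CharP.cast_eq_zero_iff F p (m + 1)).not.2 fun h => hpd (h.mul_right m)
  obtain ⟨hx, hy, hxy'⟩ := curveD_singular_point hm1 hc0 h hX hY
  obtain ⟨hx0, -⟩ := ne_zero_of_add_one_pow_eq hm hc0 hx
  obtain ⟨hy0, hy1⟩ := ne_zero_of_add_one_pow_eq hm hc0 hy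
  have hxy1 : (x + 1) ^ m = (y + 1) ^ m := by rw [hx, hy, hxy']
  set S := frobeniusFixedField F p s
  have hxS : x ∈ S := Subfield.mem_of_eq_mul_of_add_one_eq_mul
    (div_mem_frobeniusFixedField_of_pow_eq hs.1.2 hxy')
    (div_mem_frobeniusFixedField_of_pow_eq hs.1.2 hxy1)
    (div_mul_cancel₀ x hy0).symm (div_mul_cancel₀ (x + 1) hy1).symm hxy
  refine hc ((x + 1) / x) ?_ (mem_frobeniusFixedField.1 (S.div_mem (S.add_mem hxS S.one_mem) hxS))
  rw [div_pow, hx, mul_div_assoc, div_self (pow_ne_zero m hx0), mul_one]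

open MvPolynomial in
/-- Theorem 6: if no `(d−1)`-th root of `c` lies in `F_{p^s}`, then the
curve `D_c : (X+1)^d − (Y+1)^d − c(X^d − Y^d) = 0` over an algebraic closure `F` of
`F_p` has no singular points off the line `X = Y`. -/
theorem stmt_13 (p : ℕ) [Fact p.Prime] (d : ℕ) (hd : 2 ≤ d) (hpd : ¬ p ∣ d * (d - 1))
    (s : ℕ) (hs : IsLeast {s' : ℕ | 0 < s' ∧ (d - 1) ∣ (p ^ s' - 1)} s)
    (F : Type*) [Field F] [Algebra (ZMod p) F] [IsAlgClosure (ZMod p) F]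
    (c : F) (hc : ∀ c₀ : F, c₀ ^ (d - 1) = c → c₀ ^ p ^ s ≠ c₀)
    (D : MvPolynomial (Fin 2) F)
    (hD : D = (X 0 + 1) ^ d - (X 1 + 1) ^ d - C c * ((X 0) ^ d - (X 1) ^ d)) :
    ¬ ∃ x y : F, x ≠ y ∧ eval ![x, y] D = 0 ∧
      eval ![x, y] (pderiv 0 D) = 0 ∧ eval ![x, y] (pderiv 1 D) = 0 :=
  stmt_13_general p d hd hpd s hs F c hc D hD
end

section
/- Let p be a prime and d ≥ 2 an integer with p ∤ d(d−1); let s be the least positive integer such that (d−1) | (p^s − 1). Let F be an algebraic closure of F_p and let c ∈ F be such that every c₀ ∈ F with c₀^{d−1} = c satisfies c₀^{p^s} ≠ c₀. Let Q ∈ F[X,Y] be the polynomial with (X − Y)·Q(X,Y) = (X+1)^d − (Y+1)^d − c·(X^d − Y^d). Then the affine curve Q = 0 has no singular points: there is no point (x₀, y₀) ∈ F² such that Q(x₀,y₀) = 0 and both partial derivatives of Q vanish at (x₀,y₀). -/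
/-!
Write `D_c = f(X) - f(Y)` with `f = (T + 1)^d - c T^d`. Differentiating `(X - Y) Q = f(X) - f(Y)`
shows that at a singular point `(x, y)` of `Q = 0` we have `f(x) = f(y)`, `f'(x) = f'(y) = 0`, and
`f''(x) = 0` if `x = y`. Since `p ∤ d (d - 1)`, this says `(x + 1)^(d-1) = c x^(d-1)` (likewise for
`y`), so `c₀ = (x + 1) / x` is a `(d-1)`-th root of `c`, and either `c x^(d-2) = 0` (on the diagonal)
or `x^(d-1) = y^(d-1)` and `(x + 1)^(d-1) = (y + 1)^(d-1)`. Writing `q = p^s = (d-1) k + 1`, additivity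
of `t ↦ t^q` applied to `x + 1` and `y + 1` then forces `(x^(d-1))^k = 1`, i.e. `x^q = x`, whence
`c₀^q = c₀`, contradicting the hypothesis on `c`.
-/

namespace MvPolynomial

variable {R σ : Type*} [CommRing R]

theorem eval_polynomial_aeval_X (v : σ → R) (i : σ) (g : Polynomial R) :
    eval v (Polynomial.aeval (X i) g) = g.eval (v i) := by
  induction g using Polynomial.induction_on <;> simp_all

open Polynomial (derivative)

variable {f : Polynomial R} {Q : MvPolynomial (Fin 2) R}

theorem add_mul_pderiv_zero_of_mul_eq
    (hQ : (X 0 - X 1) * Q = Polynomial.aeval (X 0) f - Polynomial.aeval (X 1) f) :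
    Q + (X 0 - X 1) * pderiv 0 Q = Polynomial.aeval (X 0) (derivative f) := by
  simpa [Derivation.leibniz, add_comm] using congrArg (pderiv 0) hQ

theorem neg_add_mul_pderiv_one_of_mul_eq
    (hQ : (X 0 - X 1) * Q = Polynomial.aeval (X 0) f - Polynomial.aeval (X 1) f) :
    -Q + (X 0 - X 1) * pderiv 1 Q = -Polynomial.aeval (X 1) (derivative f) := by
  simpa [Derivation.leibniz, add_comm] using congrArg (pderiv 1) hQ

theorem eval_derivative_of_singular_of_mul_eq
    (hQ : (X 0 - X 1) * Q = Polynomial.aeval (X 0) f - Polynomial.aeval (X 1) f)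
    {x y : R} (h : eval ![x, y] Q = 0) (h₀ : eval ![x, y] (pderiv 0 Q) = 0)
    (h₁ : eval ![x, y] (pderiv 1 Q) = 0) :
    f.eval x = f.eval y ∧ (derivative f).eval x = 0 ∧ (derivative f).eval y = 0 ∧
      (x = y → (derivative (derivative f)).eval x = 0) := by
  have e := congrArg (eval ![x, y]) hQ
  have e₀ := congrArg (eval ![x, y]) (add_mul_pderiv_zero_of_mul_eq hQ)
  have e₁ := congrArg (eval ![x, y]) (neg_add_mul_pderiv_one_of_mul_eq hQ)
  have e₀₀ := congrArg (eval ![x, y] ∘ pderiv 0) (add_mul_pderiv_zero_of_mul_eq hQ)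
  simp only [Function.comp_apply, map_add, map_sub, map_neg, map_mul, Derivation.leibniz,
    smul_eq_mul, Derivation.map_aeval, eval_X, eval_polynomial_aeval_X, pderiv_X_self,
    Matrix.cons_val_zero, Matrix.cons_val_one, map_one, mul_one, mul_zero, zero_mul, add_zero,
    zero_add, neg_zero, h, h₀, h₁] at e e₀ e₁ e₀₀
  refine ⟨sub_eq_zero.mp e.symm, e₀.symm, neg_eq_zero.mp e₁.symm, ?_⟩
  rintro rfl
  simpa using e₀₀.symm

end MvPolynomial

namespace Polynomial

variable {R : Type*} [CommRing R] (c : R)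

noncomputable def addOnePowSub (n : ℕ) : R[X] :=
  (X + 1) ^ n - C c * X ^ n

@[simp]
theorem eval_addOnePowSub (n : ℕ) (x : R) :
    (addOnePowSub c n).eval x = (x + 1) ^ n - c * x ^ n := by
  simp [addOnePowSub]

theorem eval_addOnePowSub_succ (n : ℕ) (x : R) :
    (addOnePowSub c (n + 1)).eval x = (x + 1) * (addOnePowSub c n).eval x + c * x ^ n := by
  simp only [eval_addOnePowSub]
  ring

theorem derivative_addOnePowSub_succ (n : ℕ) :
    derivative (addOnePowSub c (n + 1)) = C ((n : R) + 1) * addOnePowSub c n := by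
  simp only [addOnePowSub, derivative_sub, derivative_pow, derivative_add, derivative_X,
    derivative_one, derivative_C_mul, Nat.add_sub_cancel]
  simp
  ring

end Polynomial

section Field

variable {K : Type*} [Field K]

theorem pow_expChar_pow_eq_self_of_pow_eq (p : ℕ) [ExpChar K p] {n s : ℕ} (hn : n ∣ p ^ s - 1)
    {x y : K} (hxy : x ≠ y) (hpow : x ^ n = y ^ n) (hpow_add_one : (x + 1) ^ n = (y + 1) ^ n) :
    x ^ p ^ s = x := by
  obtain ⟨k, hk⟩ := hn
  have hq : p ^ s = n * k + 1 := by
    have := Nat.one_le_pow s p (expChar_pos K p)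
    omega
  have frob (z w : K) (hzw : z ^ n = w ^ n) : z ^ p ^ s = (w ^ n) ^ k * z := by
    rw [hq, pow_succ, pow_mul, hzw]
  have hx : ((x + 1) ^ n) ^ k * (x + 1) = (x ^ n) ^ k * x + 1 := by
    rw [← frob _ _ rfl, ← frob _ _ rfl, add_pow_expChar_pow, one_pow]
  have hy : ((x + 1) ^ n) ^ k * (y + 1) = (x ^ n) ^ k * y + 1 := by
    rw [← frob _ _ hpow_add_one.symm, ← frob _ _ hpow.symm, add_pow_expChar_pow, one_pow]
  have hk_eq : ((x + 1) ^ n) ^ k = (x ^ n) ^ k := by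
    refine sub_eq_zero.mp ((mul_eq_zero.mp ?_).resolve_right (sub_ne_zero.mpr hxy))
    linear_combination hx - hy
  have hunit : (x ^ n) ^ k = 1 := by linear_combination hx - (x + 1) * hk_eq
  rw [frob _ _ rfl, hunit, one_mul]

variable {n : ℕ} {c x : K}

theorem ne_zero_of_add_one_pow_eq_s14 (hn : n ≠ 0) (h : (x + 1) ^ n = c * x ^ n) : x ≠ 0 := by
  rintro rfl
  simp [zero_pow hn] at h

theorem div_pow_eq_of_add_one_pow_eq (hn : n ≠ 0) (h : (x + 1) ^ n = c * x ^ n) :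
    ((x + 1) / x) ^ n = c := by
  rw [div_pow, div_eq_iff (pow_ne_zero _ (ne_zero_of_add_one_pow_eq_s14 hn h)), h]

open Polynomial in
theorem false_of_addOnePowSub_singular (p : ℕ) [ExpChar K p] {s : ℕ} (hn : n + 1 ∣ p ^ s - 1)
    (hc : ∀ c₀ : K, c₀ ^ (n + 1) = c → c₀ ^ p ^ s ≠ c₀) {y : K}
    (hf : (addOnePowSub c (n + 2)).eval x = (addOnePowSub c (n + 2)).eval y)
    (hx : (addOnePowSub c (n + 1)).eval x = 0) (hy : (addOnePowSub c (n + 1)).eval y = 0)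
    (hdiag : x = y → (addOnePowSub c n).eval x = 0) : False := by
  have hc₀ : c ≠ 0 := by
    rintro rfl
    exact hc 0 (zero_pow n.succ_ne_zero) (zero_pow (expChar_pow_pos K p s).ne')
  have hx' : (x + 1) ^ (n + 1) = c * x ^ (n + 1) := by simpa [sub_eq_zero] using hx
  have hy' : (y + 1) ^ (n + 1) = c * y ^ (n + 1) := by simpa [sub_eq_zero] using hy
  have hx₀ := ne_zero_of_add_one_pow_eq_s14 n.succ_ne_zero hx'
  refine hc _ (div_pow_eq_of_add_one_pow_eq n.succ_ne_zero hx') ?_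
  suffices x ^ p ^ s = x by rw [div_pow, add_pow_expChar_pow, one_pow, this]
  rcases eq_or_ne x y with rfl | hxy
  · have := eval_addOnePowSub_succ c n x
    rw [hx, hdiag rfl, mul_zero, zero_add] at this
    exact absurd this.symm (mul_ne_zero hc₀ (pow_ne_zero n hx₀))
  · simp only [eval_addOnePowSub_succ c (n + 1), hx, hy, mul_zero, zero_add] at hf
    have hpow := mul_left_cancel₀ hc₀ hf
    exact pow_expChar_pow_eq_self_of_pow_eq p hn hxy hpow (by rw [hx', hy', hpow])

end Field

open MvPolynomial in
theorem stmt_14_general (p : ℕ) [Fact p.Prime] (d : ℕ) (hd : 2 ≤ d) (hpd : ¬ p ∣ d * (d - 1))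
    (s : ℕ) (hs : IsLeast {s' : ℕ | 0 < s' ∧ (d - 1) ∣ (p ^ s' - 1)} s)
    (F : Type*) [Field F] [Algebra (ZMod p) F]
    (c : F) (hc : ∀ c₀ : F, c₀ ^ (d - 1) = c → c₀ ^ p ^ s ≠ c₀)
    (Q : MvPolynomial (Fin 2) F)
    (hQ : (X 0 - X 1) * Q
      = (X 0 + 1) ^ d - (X 1 + 1) ^ d - C c * ((X 0) ^ d - (X 1) ^ d)) :
    ¬ ∃ x y : F, eval ![x, y] Q = 0 ∧
      eval ![x, y] (pderiv 0 Q) = 0 ∧ eval ![x, y] (pderiv 1 Q) = 0 := by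
  rintro ⟨x, y, h, h₀, h₁⟩
  obtain ⟨n, rfl⟩ : ∃ n, d = n + 2 := ⟨d - 2, by omega⟩
  simp only [show n + 2 - 1 = n + 1 by omega] at hpd hs hc
  have : CharP F p := charP_of_injective_algebraMap (algebraMap (ZMod p) F).injective p
  have hcast (k : ℕ) (hk : ¬ p ∣ k + 1) : (k : F) + 1 ≠ 0 := by
    exact_mod_cast (CharP.cast_eq_zero_iff F p (k + 1)).not.mpr hk
  have hn₂ := hcast (n + 1) fun h ↦ hpd (h.mul_right _)
  have hn₁ := hcast n fun h ↦ hpd (h.mul_left _)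
  have hQ' : (X 0 - X 1) * Q = Polynomial.aeval (X 0) (Polynomial.addOnePowSub c (n + 2)) -
      Polynomial.aeval (X 1) (Polynomial.addOnePowSub c (n + 2)) := by
    rw [hQ]
    simp [Polynomial.addOnePowSub]
    ring
  obtain ⟨hf, hfx, hfy, hdiag⟩ := eval_derivative_of_singular_of_mul_eq hQ' h h₀ h₁
  simp only [Polynomial.derivative_addOnePowSub_succ, Polynomial.derivative_C_mul,
    Polynomial.eval_mul, Polynomial.eval_C] at hfx hfy hdiag
  exact false_of_addOnePowSub_singular p hs.1.2 hc hf ((mul_eq_zero.mp hfx).resolve_left hn₂)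
    ((mul_eq_zero.mp hfy).resolve_left hn₂) fun hxy ↦
      (mul_eq_zero.mp ((mul_eq_zero.mp (hdiag hxy)).resolve_left hn₂)).resolve_left hn₁

open MvPolynomial in
/-- under the hypotheses of Theorem 6, the curve `C_{f,c} : Q = 0`, where
`(X − Y)·Q = (X+1)^d − (Y+1)^d − c(X^d − Y^d)`, has no singular points at all. -/
theorem stmt_14 (p : ℕ) [Fact p.Prime] (d : ℕ) (hd : 2 ≤ d) (hpd : ¬ p ∣ d * (d - 1))
    (s : ℕ) (hs : IsLeast {s' : ℕ | 0 < s' ∧ (d - 1) ∣ (p ^ s' - 1)} s)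
    (F : Type*) [Field F] [Algebra (ZMod p) F] [IsAlgClosure (ZMod p) F]
    (c : F) (hc : ∀ c₀ : F, c₀ ^ (d - 1) = c → c₀ ^ p ^ s ≠ c₀)
    (Q : MvPolynomial (Fin 2) F)
    (hQ : (X 0 - X 1) * Q
      = (X 0 + 1) ^ d - (X 1 + 1) ^ d - C c * ((X 0) ^ d - (X 1) ^ d)) :
    ¬ ∃ x y : F, eval ![x, y] Q = 0 ∧
      eval ![x, y] (pderiv 0 Q) = 0 ∧ eval ![x, y] (pderiv 1 Q) = 0 :=
  stmt_14_general p d hd hpd s hs F c hc Q hQ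
end
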